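/- arXiv:2107.01485 — 8 statements merged into one kernel-verified Lean document; each statement's English description precedes it below -/
import Mathlib

section
/- Let R ⊆ A be an extension of commutative rings and let F = Σ_{i≥0} f_i x^i ∈ A⟦x⟧ be a formal power series. Then F belongs to A·R⟦x⟧, the additive subgroup of A⟦x⟧ generated by all products a·G with a ∈ A and G ∈ R⟦x⟧, if and only if the coefficients f₀, f₁, f₂, … all lie in some finitely generated R-submodule of A. -/
/-!
A generator `a • G` has all its coefficients in the cyclic `R`-module `R a`, and power series
whose coefficients lie in a finitely generated `R`-submodule of `A` form an additive subgroup,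
so `A·R⟦x⟧` is contained in it. Conversely, if the coefficients of `F` are `R`-combinations
`f i = ∑ j, c i j * v j`, then `F = ∑ j, v j • (∑ i, c i j xⁱ)` is a finite sum of generators.
-/

namespace Subring

theorem mem_span_range_iff {A : Type*} [CommRing A] {R : Subring A} {ι : Type*} [Fintype ι]
    {v : ι → A} {x : A} :
    x ∈ Submodule.span R (Set.range v) ↔ ∃ c : ι → A, (∀ j, c j ∈ R) ∧ x = ∑ j, c j * v j := by
  rw [Submodule.mem_span_range_iff_exists_fun]
  constructor
  · rintro ⟨c, rfl⟩
    exact ⟨fun j => c j, fun j => (c j).2, rfl⟩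
  · rintro ⟨c, hc, rfl⟩
    exact ⟨fun j => ⟨c j, hc j⟩, rfl⟩

end Subring

namespace PowerSeries

variable {A : Type*} [CommRing A] (R : Subring A)

/-- The additive subgroup `A·R⟦x⟧` of `A⟦x⟧`. -/
def smulSubringSpan : AddSubgroup A⟦X⟧ :=
  AddSubgroup.closure {H | ∃ (a : A) (G : A⟦X⟧), (∀ i : ℕ, coeff i G ∈ R) ∧ H = a • G}

def fgCoeffs : AddSubgroup A⟦X⟧ where
  carrier := {F | ∃ M : Submodule R A, M.FG ∧ ∀ i, coeff i F ∈ M}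
  zero_mem' := ⟨⊥, Submodule.fg_bot, fun i => by simp⟩
  add_mem' := by
    rintro F₁ F₂ ⟨M₁, hM₁, h₁⟩ ⟨M₂, hM₂, h₂⟩
    exact ⟨M₁ ⊔ M₂, hM₁.sup hM₂, fun i => by
      simpa only [map_add] using Submodule.add_mem_sup (h₁ i) (h₂ i)⟩
  neg_mem' := by
    rintro F ⟨M, hM, h⟩
    exact ⟨M, hM, fun i => by simpa only [map_neg] using M.neg_mem (h i)⟩

variable {R}

theorem smul_mem_fgCoeffs (a : A) {G : A⟦X⟧} (hG : ∀ i, coeff i G ∈ R) :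
    a • G ∈ fgCoeffs R :=
  ⟨R ∙ a, Submodule.fg_span_singleton a, fun i =>
    Submodule.mem_span_singleton.2 ⟨⟨coeff i G, hG i⟩, by
      rw [Subring.smul_def, smul_eq_mul, coeff_smul, smul_eq_mul, mul_comm]⟩⟩

theorem mem_smulSubringSpan_of_forall_coeff_mem_span {ι : Type*} [Fintype ι] {v : ι → A}
    {F : A⟦X⟧} (hF : ∀ i, coeff i F ∈ Submodule.span R (Set.range v)) :
    F ∈ smulSubringSpan R := by
  choose c hc using fun i => (Submodule.mem_span_range_iff_exists_fun R).1 (hF i)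
  have hsum : F = ∑ j, v j • mk fun i => (c i j : A) := by
    ext i
    simp only [← hc i, map_sum, coeff_smul, coeff_mk, Subring.smul_def, smul_eq_mul, mul_comm]
  rw [hsum]
  exact AddSubgroup.sum_mem _ fun j _ => AddSubgroup.subset_closure
    ⟨v j, mk fun i => (c i j : A), fun i => by simp, rfl⟩

theorem smulSubringSpan_eq_fgCoeffs : smulSubringSpan R = fgCoeffs R := by
  refine le_antisymm ((AddSubgroup.closure_le _).2 ?_) fun F ⟨M, hM, hF⟩ => ?_
  · rintro _ ⟨a, G, hG, rfl⟩
    exact smul_mem_fgCoeffs a hG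
  · obtain ⟨n, v, rfl⟩ := Submodule.fg_iff_exists_fin_generating_family.1 hM
    exact mem_smulSubringSpan_of_forall_coeff_mem_span hF

end PowerSeries

open PowerSeries

/-- Let `R ⊆ A` be an extension of commutative rings. A power series `F ∈ A⟦x⟧` lies in the
additive subgroup `A·R⟦x⟧` generated by products `a • G` with `a ∈ A` and `G ∈ R⟦x⟧` if and
only if its coefficients all lie in a finitely generated `R`-submodule of `A` (i.e. there are
finitely many elements `v 0, …, v (n-1)` of `A` such that every coefficient of `F` is an
`R`-linear combination of them). -/
theorem mem_smul_subring_powerSeries_iff_finite_rank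
    (A : Type) [CommRing A] (R : Subring A) (F : PowerSeries A) :
    F ∈ AddSubgroup.closure
        {H : PowerSeries A | ∃ (a : A) (G : PowerSeries A),
          (∀ i : ℕ, PowerSeries.coeff i G ∈ R) ∧ H = a • G} ↔
      ∃ (n : ℕ) (v : Fin n → A), ∀ i : ℕ, ∃ c : Fin n → A,
        (∀ j, c j ∈ R) ∧ PowerSeries.coeff i F = ∑ j, c j * v j := by
  change F ∈ smulSubringSpan R ↔ _
  rw [smulSubringSpan_eq_fgCoeffs]
  constructor
  · rintro ⟨M, hM, hF⟩
    obtain ⟨n, v, rfl⟩ := Submodule.fg_iff_exists_fin_generating_family.1 hM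
    exact ⟨n, v, fun i => Subring.mem_span_range_iff.1 (hF i)⟩
  · rintro ⟨n, v, hF⟩
    exact ⟨_, Submodule.fg_span (Set.finite_range v),
      fun i => Subring.mem_span_range_iff.2 (hF i)⟩
end

section
/- The quotient abelian group ℤ⟦x,y⟧ / (ℤ⟦x⟧·ℤ⟦y⟧) is torsion free: if F ∈ ℤ⟦x,y⟧ and n ≥ 1 is an integer with n·F ∈ ℤ⟦x⟧·ℤ⟦y⟧, then F ∈ ℤ⟦x⟧·ℤ⟦y⟧. -/
noncomputable section

/-- `f(x)·g(y)` as an element of `ℤ⟦x,y⟧`, realized as `(ℤ⟦x⟧)⟦y⟧`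
(inner variable `x`, outer variable `y`). -/
def prodXY (f g : PowerSeries ℤ) : PowerSeries (PowerSeries ℤ) :=
  PowerSeries.mk fun i => (PowerSeries.coeff i g) • f

/-- The additive subgroup `ℤ⟦x⟧·ℤ⟦y⟧ ⊆ ℤ⟦x,y⟧` of series of finite rank, i.e. finite sums
`Σ f_i(x)·g_i(y)`. -/
def finiteRank : AddSubgroup (PowerSeries (PowerSeries ℤ)) :=
  AddSubgroup.closure {F | ∃ f g : PowerSeries ℤ, F = prodXY f g}

/-!
Read `F ∈ ℤ⟦x⟧⟦y⟧` through its `y`-coefficients `F_j ∈ ℤ⟦x⟧`: `F` has finite rank exactly when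
all `F_j` lie in one finitely generated `ℤ`-submodule `S` of `ℤ⟦x⟧`. If the coefficients
`n • F_j` of `n • F` lie in `S`, then the `F_j` lie in the preimage of `S` under multiplication
by `n`. That map is injective because `ℤ⟦x⟧` is torsion free, so the preimage embeds into `S`,
and it is finitely generated because `ℤ` is Noetherian.
-/

open PowerSeries

instance PowerSeries.instIsAddTorsionFree {R : Type*} [Semiring R] [IsAddTorsionFree R] :
    IsAddTorsionFree R⟦X⟧ where
  nsmul_right_injective _ hn _ _ h :=
    ext fun k => nsmul_right_injective hn (by simpa only [map_nsmul] using congrArg (coeff k) h)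

namespace Submodule

variable {R M N : Type*} [Ring R] [IsNoetherianRing R] [AddCommGroup M] [Module R M]
  [AddCommGroup N] [Module R N]

theorem FG.comap_of_injective {f : M →ₗ[R] N} (hf : Function.Injective f) {S : Submodule R N}
    (hS : S.FG) : (S.comap f).FG :=
  fg_of_fg_map_injective f hf (hS.of_le (map_comap_le f S))

end Submodule

theorem exists_fg_forall_coeff_mem_of_mem_finiteRank {F : PowerSeries (PowerSeries ℤ)}
    (hF : F ∈ finiteRank) :
    ∃ S : Submodule ℤ (PowerSeries ℤ), S.FG ∧ ∀ j, coeff j F ∈ S := by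
  induction hF using AddSubgroup.closure_induction with
  | mem _ hprod =>
    obtain ⟨f, g, rfl⟩ := hprod
    refine ⟨Submodule.span ℤ {f}, Submodule.fg_span_singleton f, fun j => ?_⟩
    rw [prodXY, coeff_mk]
    exact Submodule.smul_mem _ _ (Submodule.mem_span_singleton_self f)
  | zero => exact ⟨⊥, Submodule.fg_bot, fun j => by simp⟩
  | add _ _ _ _ ihF ihG =>
    obtain ⟨S, hS, hSF⟩ := ihF
    obtain ⟨T, hT, hTG⟩ := ihG
    exact ⟨S ⊔ T, hS.sup hT, fun j => by
      rw [map_add]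
      exact Submodule.add_mem_sup (hSF j) (hTG j)⟩
  | neg _ _ ih =>
    obtain ⟨S, hS, hSF⟩ := ih
    exact ⟨S, hS, fun j => by simpa using hSF j⟩

theorem mem_finiteRank_of_forall_coeff_mem {F : PowerSeries (PowerSeries ℤ)}
    {S : Submodule ℤ (PowerSeries ℤ)} (hS : S.FG) (hF : ∀ j, coeff j F ∈ S) :
    F ∈ finiteRank := by
  obtain ⟨s, rfl⟩ := hS
  choose c hc using fun j => Submodule.mem_span_finset.1 (hF j)
  -- `F_j = Σ_f c_j(f) • f` gives `F = Σ_f f(x) · (Σ_j c_j(f) y^j)`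
  have hsum : F = ∑ f ∈ s, prodXY f (mk fun j => c j f) := by
    ext1 j
    rw [map_sum, ← (hc j).2]
    exact Finset.sum_congr rfl fun f _ => by rw [prodXY, coeff_mk, coeff_mk]
  rw [hsum]
  exact AddSubgroup.sum_mem _ fun f _ => AddSubgroup.subset_closure ⟨f, _, rfl⟩

theorem mem_finiteRank_iff_exists_fg {F : PowerSeries (PowerSeries ℤ)} :
    F ∈ finiteRank ↔ ∃ S : Submodule ℤ (PowerSeries ℤ), S.FG ∧ ∀ j, coeff j F ∈ S :=
  ⟨exists_fg_forall_coeff_mem_of_mem_finiteRank,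
    fun ⟨_, hS, hF⟩ => mem_finiteRank_of_forall_coeff_mem hS hF⟩

/-- The quotient `ℤ⟦x,y⟧ / (ℤ⟦x⟧·ℤ⟦y⟧)` is torsion free: if `n ≥ 1` and
`n·F ∈ ℤ⟦x⟧·ℤ⟦y⟧`, then `F ∈ ℤ⟦x⟧·ℤ⟦y⟧`. -/
theorem quotient_finiteRank_torsionFree (F : PowerSeries (PowerSeries ℤ)) (n : ℕ)
    (hn : 1 ≤ n) (h : n • F ∈ finiteRank) : F ∈ finiteRank := by
  obtain ⟨S, hS, hnF⟩ := mem_finiteRank_iff_exists_fg.1 h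
  refine mem_finiteRank_iff_exists_fg.2
    ⟨S.comap (n • LinearMap.id), hS.comap_of_injective (nsmul_right_injective (by omega)),
      fun j => ?_⟩
  simpa only [Submodule.mem_comap, LinearMap.smul_apply, LinearMap.id_apply, ← map_nsmul]
    using hnF j
end
end

section
/- Let k ⊆ K be fields, A a commutative K-algebra, and n, d positive integers. Assume α, β ∈ K are nonzero and the elements 1, αβ⁻¹, (αβ⁻¹)², … of K are linearly independent over k. Let H, G ∈ A⟦x⟧ be power series such that the k-rank of H is at most d−1 and the K-rank of G is at most n−1. Then the series F = (β − α·x)·H + G does not have an n,d-sieve. -/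
/-!
Work modulo the `K`-span `W` of the coefficients `g_j` of `G`. A vanishing coefficient
`f_{j+1} = β h_{j+1} - α h_j + g_{j+1}` of `F` gives `h_{j+1} ≡ γ h_j` with `γ = αβ⁻¹`, so inside a
block of the sieve `h_{m+ld+i} ≡ γ^i h_{m+ld}` for `i < d`. These `d` classes lie in the image of
the `k`-span of the `h_j`, of `k`-rank `< d`; since the powers of `γ` are `k`-independent, the whole
block vanishes modulo `W`. Hence each `f_{m+(l+1)d} = β h_{m+(l+1)d} - α h_{m+ld+d-1} + g` lies
in `W`, whose `K`-rank is `< n`, so these `n` coefficients cannot be `K`-independent.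
-/

noncomputable section

/-- A power series `F = Σ f_j xʲ ∈ A⟦x⟧` has an `n,d`-sieve (with respect to a field `K` acting
on `A`) if there is `m ≥ 0` such that `f_{m+ld+i} = 0` for all `0 ≤ l ≤ n`, `1 ≤ i ≤ d−1`, and
the coefficients `f_{m+d}, f_{m+2d}, …, f_{m+nd}` are linearly independent over `K`. -/
def HasSieve (K A : Type) [Field K] [CommRing A] [Algebra K A] (n d : ℕ)
    (F : PowerSeries A) : Prop :=
  ∃ m : ℕ,
    (∀ l : ℕ, l ≤ n → ∀ i : ℕ, 1 ≤ i → i ≤ d - 1 →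
      PowerSeries.coeff (R := A) (m + l * d + i) F = 0) ∧
    LinearIndependent K fun l : Fin n => PowerSeries.coeff (R := A) (m + ((l : ℕ) + 1) * d) F

theorem PowerSeries.coeff_succ_C_sub_C_mul_X_mul {R : Type*} [CommRing R] (a b : R)
    (H : PowerSeries R) (j : ℕ) :
    coeff (j + 1) ((C b - C a * X) * H) = b * coeff (j + 1) H - a * coeff j H := by
  rw [sub_mul, map_sub, coeff_C_mul, mul_assoc, coeff_C_mul, coeff_succ_X_mul]

theorem LinearIndependent.smul_of_ne_zero {k K M ι : Type*} [Field k] [Field K] [Algebra k K]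
    [AddCommGroup M] [Module K M] [Module k M] [IsScalarTower k K M] {c : ι → K}
    (hc : LinearIndependent k c) {v : M} (hv : v ≠ 0) :
    LinearIndependent k fun i => c i • v :=
  (linearIndependent_smul hc (.of_subsingleton (v := fun _ : Unit => v) () hv)).comp
    (fun i => (i, ())) fun _ _ h => congrArg Prod.fst h

theorem LinearIndependent.natCast_le_rank_of_mem {R M : Type*} [DivisionRing R] [AddCommGroup M]
    [Module R M] {n : ℕ} {f : Fin n → M} (hf : LinearIndependent R f) {S : Submodule R M}
    (hS : ∀ i, f i ∈ S) : (n : Cardinal) ≤ Module.rank R S := by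
  have hf' : LinearIndependent R fun i => (⟨f i, hS i⟩ : S) := .of_comp S.subtype hf
  simpa using hf'.cardinal_lift_le_rank

section GeometricBlocks

variable {k K M : Type*} [Field k] [Field K] [Algebra k K] [AddCommGroup M] [Module K M]
  [Module k M] [IsScalarTower k K M] {γ : K} {V : Submodule k M} {d : ℕ}

theorem eq_zero_of_pow_smul_mem (hγ : LinearIndependent k fun j : ℕ => γ ^ j)
    (hV : Module.rank k V < d) {v : M} (hv : ∀ i < d, γ ^ i • v ∈ V) : v = 0 := by
  by_contra hv0
  have hli : LinearIndependent k fun i : Fin d => γ ^ (i : ℕ) • v :=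
    (hγ.comp _ Fin.val_injective).smul_of_ne_zero hv0
  exact (hli.natCast_le_rank_of_mem fun i => hv i i.isLt).not_gt hV

theorem eq_zero_of_geometric_of_mem (hγ : LinearIndependent k fun j : ℕ => γ ^ j)
    (hV : Module.rank k V < d) {v : ℕ → M} (hvV : ∀ j, v j ∈ V) {j : ℕ}
    (hrec : ∀ i, i + 1 < d → v (j + i + 1) = γ • v (j + i)) : ∀ i < d, v (j + i) = 0 := by
  have hpow : ∀ i < d, v (j + i) = γ ^ i • v j := by
    intro i hi
    induction i with
    | zero => simp
    | succ i ih => rw [← add_assoc, hrec i hi, ih (by omega), smul_smul, pow_succ']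
  have hv : v j = 0 := eq_zero_of_pow_smul_mem hγ hV fun i hi => hpow i hi ▸ hvV _
  intro i hi
  rw [hpow i hi, hv, smul_zero]

end GeometricBlocks

open PowerSeries Submodule in
theorem coeff_mem_span_coeff_of_sieve_zeros {k K A : Type*} [Field k] [Field K] [Algebra k K]
    [CommRing A] [Algebra K A] [Algebra k A] [IsScalarTower k K A] {n d m : ℕ} (hd : 0 < d)
    {α β : K} (hβ : β ≠ 0) (hind : LinearIndependent k fun j : ℕ => (α * β⁻¹) ^ j)
    {H G : A⟦X⟧} (hH : Module.rank k (span k (Set.range fun i => coeff i H)) < d)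
    (hzero : ∀ l ≤ n, ∀ i, 1 ≤ i → i ≤ d - 1 →
      coeff (m + l * d + i) ((C (algebraMap K A β) - C (algebraMap K A α) * X) * H + G) = 0)
    {l : ℕ} (hl : l < n) :
    coeff (m + (l + 1) * d) ((C (algebraMap K A β) - C (algebraMap K A α) * X) * H + G) ∈
      span K (Set.range fun i => coeff i G) := by
  set F := (C (algebraMap K A β) - C (algebraMap K A α) * X) * H + G
  set W := span K (Set.range fun i => coeff i G)
  have hG_mod : ∀ j, W.mkQ (coeff j G) = 0 := fun j =>
    (Quotient.mk_eq_zero W).mpr (subset_span ⟨j, rfl⟩)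
  have hF_mod : ∀ j,
      W.mkQ (coeff (j + 1) F) = β • W.mkQ (coeff (j + 1) H) - α • W.mkQ (coeff j H) := by
    intro j
    rw [map_add, coeff_succ_C_sub_C_mul_X_mul, ← Algebra.smul_def, ← Algebra.smul_def, map_add,
      hG_mod, add_zero, map_sub, map_smul, map_smul]
  have hblock : ∀ b ≤ n, ∀ i < d, W.mkQ (coeff (m + b * d + i) H) = 0 := by
    intro b hb
    refine eq_zero_of_geometric_of_mem hind ((rank_map_le (W.mkQ.restrictScalars k) _).trans_lt hH)
      (v := fun j => W.mkQ (coeff j H)) (fun j => mem_map_of_mem (subset_span ⟨j, rfl⟩))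
      fun i hi => ?_
    have hrel := congrArg W.mkQ (hzero b hb (i + 1) (by omega) (by omega))
    rw [map_zero, ← add_assoc, hF_mod, sub_eq_zero] at hrel
    calc W.mkQ (coeff (m + b * d + i + 1) H)
        = β⁻¹ • β • W.mkQ (coeff (m + b * d + i + 1) H) := (inv_smul_smul₀ hβ _).symm
      _ = (α * β⁻¹) • W.mkQ (coeff (m + b * d + i) H) := by rw [hrel, smul_smul, mul_comm]
  have hidx : m + (l + 1) * d = m + l * d + (d - 1) + 1 := by rw [add_mul, one_mul]; omega
  rw [← Quotient.mk_eq_zero, ← mkQ_apply, hidx, hF_mod, ← hidx, ← add_zero (m + (l + 1) * d),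
    hblock (l + 1) hl 0 hd, hblock l hl.le (d - 1) (by omega), smul_zero, smul_zero, sub_zero]

theorem no_sieve_of_small_rank_general (k K A : Type) [Field k] [Field K] [Algebra k K]
    [CommRing A] [Algebra K A] [Algebra k A] [IsScalarTower k K A]
    (n d : ℕ) (hn : 0 < n) (hd : 0 < d) (α β : K) (hβ : β ≠ 0)
    (hind : LinearIndependent k fun j : ℕ => (α * β⁻¹) ^ j)
    (H G : PowerSeries A)
    (hH : Module.rank k
      (Submodule.span k (Set.range fun i : ℕ => PowerSeries.coeff (R := A) i H)) ≤ (d - 1 : ℕ))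
    (hG : Module.rank K
      (Submodule.span K (Set.range fun i : ℕ => PowerSeries.coeff (R := A) i G)) ≤ (n - 1 : ℕ)) :
    ¬ HasSieve K A n d
      ((PowerSeries.C (R := A) (algebraMap K A β) - PowerSeries.C (R := A) (algebraMap K A α)
          * PowerSeries.X) * H + G) := by
  rintro ⟨m, hzero, hLI⟩
  have hH' := hH.trans_lt (by exact_mod_cast Nat.sub_lt hd one_pos : ((d - 1 : ℕ) : Cardinal) < d)
  have hsieve := fun l : Fin n => coeff_mem_span_coeff_of_sieve_zeros hd hβ hind hH' hzero l.isLt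
  have hcard := (hLI.natCast_le_rank_of_mem hsieve).trans hG
  norm_cast at hcard
  omega

/-- **Lemma 3.5** (sieve versus rank). Let `k ⊆ K` be fields, `A` a commutative `K`-algebra,
`α, β ∈ K` nonzero with `1, αβ⁻¹, (αβ⁻¹)², …` linearly independent over `k`. If the `k`-rank of
`H ∈ A⟦x⟧` is at most `d−1` and the `K`-rank of `G ∈ A⟦x⟧` is at most `n−1`, then
`F = (β − α·x)·H + G` has no `n,d`-sieve. -/
theorem no_sieve_of_small_rank (k K A : Type) [Field k] [Field K] [Algebra k K]
    [CommRing A] [Algebra K A] [Algebra k A] [IsScalarTower k K A]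
    (n d : ℕ) (hn : 0 < n) (hd : 0 < d) (α β : K) (hα : α ≠ 0) (hβ : β ≠ 0)
    (hind : LinearIndependent k fun j : ℕ => (α * β⁻¹) ^ j)
    (H G : PowerSeries A)
    (hH : Module.rank k
      (Submodule.span k (Set.range fun i : ℕ => PowerSeries.coeff (R := A) i H)) ≤ (d - 1 : ℕ))
    (hG : Module.rank K
      (Submodule.span K (Set.range fun i : ℕ => PowerSeries.coeff (R := A) i G)) ≤ (n - 1 : ℕ)) :
    ¬ HasSieve K A n d
      ((PowerSeries.C (R := A) (algebraMap K A β) - PowerSeries.C (R := A) (algebraMap K A α)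
          * PowerSeries.X) * H + G) :=
  no_sieve_of_small_rank_general k K A n d hn hd α β hβ hind H G hH hG

end
end

section
/- Fix a prime p. Let 𝒜 be a set and for each α ∈ 𝒜 let g_α = Σ_{i∈ℤ} a_{α,i} x^i ∈ 𝔽_p⟮x⟯ be a formal Laurent series. Assume that for every N > 0 and every α ∈ 𝒜 there exists m ∈ ℤ such that a_{α,m} ≠ 0, a_{β,m} = 0 for every β ≠ α, and a_{β,m+i} = 0 for every β ∈ 𝒜 (including β = α) and every integer i with 0 < |i| < N. Then the family (g_α)_{α∈𝒜} is linearly independent over the field 𝔽_p(x). -/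
/-!
Clearing denominators turns a nontrivial `𝔽_p(x)`-relation `∑ q_β g_β = 0` into one with
polynomial coefficients, all of degree `< N` for some `N`. Choose `m` isolated for `α` with gap
`N` and let `d = deg q_α`. In the coefficient of `x^(m+d)` of `∑ q_β g_β`, every product
`q_{β,j} a_{β,m+d-j}` with `j ≠ d` vanishes because `0 < |d - j| < N`, and those with `j = d`
vanish for `β ≠ α`; what remains is `lc(q_α) a_{α,m} ≠ 0`.
-/

open Polynomial HahnSeries

open scoped RatFunc

namespace LaurentSeries

variable {R : Type*} [CommSemiring R]

theorem algebraMap_monomial (j : ℕ) (a : R) :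
    algebraMap R[X] (LaurentSeries R) (monomial j a) = single (j : ℤ) a := by
  rw [← C_mul_X_pow_eq_monomial, map_mul, map_pow, algebraMap_hahnSeries_apply,
    algebraMap_hahnSeries_apply, coe_C, coe_X, ofPowerSeries_C, ofPowerSeries_X, single_pow,
    one_pow, C_apply, single_mul_single, zero_add, mul_one, nsmul_one]

theorem coeff_algebraMap_mul (P : R[X]) (f : LaurentSeries R) (k : ℤ) :
    (algebraMap R[X] (LaurentSeries R) P * f).coeff k =
      ∑ j ∈ P.support, P.coeff j * f.coeff (k - j) := by
  conv_lhs => rw [P.as_sum_support, map_sum, Finset.sum_mul, HahnSeries.coeff_sum]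
  refine Finset.sum_congr rfl fun j _ => ?_
  rw [algebraMap_monomial, ← coeff_single_mul_add (a := k - j) (b := (j : ℤ)), sub_add_cancel]

theorem coeff_smul_add_of_isolated {P : R[X]} {f : LaurentSeries R} {N : ℕ} {m : ℤ} {d : ℕ}
    (hgap : ∀ i : ℤ, 0 < |i| → |i| < N → f.coeff (m + i) = 0) (hP : P.natDegree < N)
    (hd : d < N) :
    (P • f).coeff (m + d) = P.coeff d * f.coeff m := by
  rw [Algebra.smul_def, coeff_algebraMap_mul, Finset.sum_eq_single d]
  · rw [add_sub_cancel_right]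
  · intro j hj hjd
    have hjN : j < N := (le_natDegree_of_mem_supp j hj).trans_lt hP
    rw [show m + d - j = m + ((d : ℤ) - j) by ring,
      hgap _ (abs_pos.mpr (by omega)) (abs_sub_lt_iff.mpr (by omega)), mul_zero]
  · intro hd
    rw [notMem_support_iff.mp hd, zero_mul]

theorem coeff_sum_smul_add_of_isolated {ι : Type*} {s : Finset ι} {q : ι → R[X]}
    {g : ι → LaurentSeries R} {N : ℕ} {m : ℤ} {d : ℕ} {α : ι} (hα : α ∈ s)
    (hm : ∀ β, β ≠ α → (g β).coeff m = 0)
    (hgap : ∀ β (i : ℤ), 0 < |i| → |i| < N → (g β).coeff (m + i) = 0)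
    (hq : ∀ β ∈ s, (q β).natDegree < N) (hd : d < N) :
    (∑ β ∈ s, q β • g β).coeff (m + d) = (q α).coeff d * (g α).coeff m := by
  rw [HahnSeries.coeff_sum, Finset.sum_eq_single_of_mem α hα]
  · exact coeff_smul_add_of_isolated (hgap α) (hq α hα) hd
  · intro β hβ hβα
    rw [coeff_smul_add_of_isolated (hgap β) (hq β hβ) hd, hm β hβα, mul_zero]

end LaurentSeries

/-- **Lemma 3.7.** Fix a prime `p`. Let `(g_α)_{α ∈ 𝒜}` be a family of formal Laurent series over
`𝔽_p` such that for every `N > 0` and every `α` there is an `m ∈ ℤ` with: the `m`-th coefficient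
of `g_α` is nonzero, the `m`-th coefficient of `g_β` vanishes for all `β ≠ α`, and the `(m+i)`-th
coefficient of `g_β` vanishes for every `β` and every `i` with `0 < |i| < N`. Then the family
`(g_α)` is linearly independent over the field of rational functions `𝔽_p(x)`. -/
theorem laurentSeries_linearIndependent_of_separated_supports
    (p : ℕ) [Fact p.Prime] (𝒜 : Type) (g : 𝒜 → LaurentSeries (ZMod p))
    (hsep : ∀ N : ℕ, 0 < N → ∀ α : 𝒜, ∃ m : ℤ,
      (g α).coeff m ≠ 0 ∧
      (∀ β : 𝒜, β ≠ α → (g β).coeff m = 0) ∧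
      (∀ (β : 𝒜) (i : ℤ), 0 < |i| → |i| < N → (g β).coeff (m + i) = 0)) :
    LinearIndependent (RatFunc (ZMod p)) g := by
  rw [← LinearIndependent.iff_fractionRing (ZMod p)[X] (RatFunc (ZMod p)),
    linearIndependent_iff']
  intro s q hsum α hα
  by_contra hqα
  set N := s.sup (fun β => (q β).natDegree) + 1
  have hdeg : ∀ β ∈ s, (q β).natDegree < N := fun β hβ =>
    Nat.lt_succ_of_le (Finset.le_sup (f := fun β => (q β).natDegree) hβ)
  obtain ⟨m, hgα, hm, hgap⟩ := hsep N (Nat.succ_pos _) α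
  have hcoeff := LaurentSeries.coeff_sum_smul_add_of_isolated hα hm hgap hdeg (hdeg α hα)
  rw [hsum, HahnSeries.coeff_zero, coeff_natDegree] at hcoeff
  exact mul_ne_zero (leadingCoeff_ne_zero.mpr hqα) hgα hcoeff.symm
end

section
/- Let U, V ∈ ℤ[x] be polynomials such that V has constant term 1 or −1 (so V is invertible in ℤ⟦x⟧) and the power series U·V⁻¹ ∈ ℤ⟦x⟧ is not a constant integer. Then there exists p₀ such that for every prime p ≥ p₀ the reductions α = U mod p and β = V mod p are nonzero elements of 𝔽_p[x] ⊆ 𝔽_p(x) and the elements 1, αβ⁻¹, (αβ⁻¹)², … of 𝔽_p(x) are linearly independent over 𝔽_p. -/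
/-!
Since `V(0) = ±1`, a congruence `U ≡ c V (mod p)` forces `c ≡ U(0) V(0)` by comparing constant
terms, hence `p` divides every coefficient of the nonzero integer polynomial
`D = U(0) V - V(0) U`; this fails once `p` exceeds the absolute value of its leading
coefficient. For such `p` the rational function `α / β` is not constant, so it is
transcendental over `𝔽_p` (`RatFunc.transcendental_of_ne_C`) and its powers are linearly
independent.
-/

open Polynomial

theorem Transcendental.linearIndependent_pow {R A : Type*} [CommRing R] [CommRing A]
    [Algebra R A] {t : A} (ht : Transcendental R t) :
    LinearIndependent R fun n : ℕ => t ^ n := by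
  simpa [Function.comp_def, coe_basisMonomials, ← X_pow_eq_monomial] using
    (basisMonomials R).linearIndependent.map' (Polynomial.aeval t).toLinearMap
      (LinearMap.ker_eq_bot.mpr (transcendental_iff_injective.mp ht))

theorem RatFunc.transcendental_div_of_ne_C_mul {K : Type*} [Field K] {α β : K[X]} (hβ : β ≠ 0)
    (h : ∀ c : K, α ≠ Polynomial.C c * β) :
    Transcendental K (algebraMap K[X] (RatFunc K) α * (algebraMap K[X] (RatFunc K) β)⁻¹) := by
  refine RatFunc.transcendental_of_ne_C _ fun ⟨c, hc⟩ => h c ?_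
  have hβ' : algebraMap K[X] (RatFunc K) β ≠ 0 := by simpa using hβ
  apply IsFractionRing.injective K[X] (RatFunc K)
  rw [map_mul, RatFunc.algebraMap_C, ← hc, inv_mul_cancel_right₀ hβ']

theorem Polynomial.map_intCastRingHom_ne_zero {q : ℤ[X]} (hq : q ≠ 0) {p : ℕ}
    (hp : q.leadingCoeff.natAbs < p) : q.map (Int.castRingHom (ZMod p)) ≠ 0 := by
  intro h
  have hdvd : (p : ℤ) ∣ q.leadingCoeff := by
    rw [← ZMod.intCast_zmod_eq_zero_iff_dvd, ← eq_intCast (Int.castRingHom (ZMod p)),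
      leadingCoeff, ← coeff_map, h, coeff_zero]
  have := Int.natAbs_le_of_dvd_ne_zero hdvd (leadingCoeff_ne_zero.mpr hq)
  omega

theorem Polynomial.C_coeff_zero_mul_eq_of_eq_C_mul {R : Type*} [CommRing R] {U V : R[X]} {c : R}
    (h : U = C c * V) : C (U.coeff 0) * V = C (V.coeff 0) * U := by
  rw [h, coeff_C_mul, C_mul]
  ring

theorem Polynomial.C_coeff_zero_mul_sub_ne_zero {R : Type*} [CommRing R] {U V : R[X]}
    (hV : IsUnit (V.coeff 0)) (hUV : ∀ c : R, U ≠ C c * V) :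
    C (U.coeff 0) * V - C (V.coeff 0) * U ≠ 0 := by
  obtain ⟨u, hu⟩ := hV
  intro h
  apply hUV (↑u⁻¹ * U.coeff 0)
  rw [sub_eq_zero, ← hu] at h
  calc U = C (↑u⁻¹ * ↑u) * U := by simp
    _ = C ↑u⁻¹ * (C ↑u * U) := by rw [C_mul, mul_assoc]
    _ = C (↑u⁻¹ * U.coeff 0) * V := by rw [← h, C_mul, mul_assoc]

/-- **Lemma 3.9.** Let `U, V ∈ ℤ[x]` with `V` invertible in `ℤ⟦x⟧` (constant term `±1`) and
`U·V⁻¹` not a constant integer (i.e. `U ≠ c·V` for every `c ∈ ℤ`). Then there is `p₀` such that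
for every prime `p ≥ p₀` the reductions `α = U mod p`, `β = V mod p` are nonzero in `𝔽_p[x]` and
the powers `1, αβ⁻¹, (αβ⁻¹)², …` are linearly independent over `𝔽_p` in `𝔽_p(x)`. -/
theorem exists_p0_powers_linearIndependent (U V : Polynomial ℤ)
    (hV : V.coeff 0 = 1 ∨ V.coeff 0 = -1)
    (hUV : ∀ c : ℤ, U ≠ Polynomial.C c * V) :
    ∃ p₀ : ℕ, ∀ (p : ℕ) [Fact p.Prime], p₀ ≤ p →
      U.map (Int.castRingHom (ZMod p)) ≠ 0 ∧
      V.map (Int.castRingHom (ZMod p)) ≠ 0 ∧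
      LinearIndependent (ZMod p) fun n : ℕ =>
        (algebraMap (Polynomial (ZMod p)) (RatFunc (ZMod p)) (U.map (Int.castRingHom (ZMod p))) *
          (algebraMap (Polynomial (ZMod p)) (RatFunc (ZMod p))
            (V.map (Int.castRingHom (ZMod p))))⁻¹) ^ n := by
  set D := C (U.coeff 0) * V - C (V.coeff 0) * U
  have hD : D ≠ 0 := C_coeff_zero_mul_sub_ne_zero (by rcases hV with h | h <;> simp [h]) hUV
  refine ⟨D.leadingCoeff.natAbs + 1, fun p _ hp => ?_⟩
  set f := Int.castRingHom (ZMod p)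
  have hβ : V.map f ≠ 0 := fun h => by
    have h0 := congrArg (coeff · 0) h
    rcases hV with hV | hV <;> simp [coeff_map, hV] at h0
  have hαβ : ∀ c : ZMod p, U.map f ≠ C c * V.map f := by
    intro c hc
    apply map_intCastRingHom_ne_zero hD (show D.leadingCoeff.natAbs < p by omega)
    simpa [D, f, coeff_map, sub_eq_zero] using C_coeff_zero_mul_eq_of_eq_C_mul hc
  exact ⟨fun h => hαβ 0 (by simp [h]), hβ,
    (RatFunc.transcendental_div_of_ne_C_mul hβ hαβ).linearIndependent_pow⟩
end

section
/- There exists a family (g_r)_{r∈ℝ} of formal power series g_r ∈ ℤ⟦x⟧, indexed by the real numbers, such that for every prime p the family of images of the g_r in 𝔽_p⟮x⟯ (obtained by reducing all coefficients modulo p) is linearly independent over the field 𝔽_p(x). -/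
/-!
Attach to every real `r` an infinite set `K r ⊆ ℕ` such that any two of these sets meet in a
finite set (the codes of the finite prefixes of `σ r`, for an injection `σ : ℝ → (ℕ → Bool)`),
and take `g r = ∑_{k ∈ K r} x^(2^k)`. Given a relation `∑ q_r g_r = 0` with polynomial
coefficients of degree at most `D`, pick `k ∈ K r` outside the finitely many other sets involved,
with `2^k > 2D`. Since all other exponents `2^b` are farther than `D` from `2^k`, the coefficient
of `x^(2^k + deg q_r)` in the relation is the leading coefficient of `q_r`, so `q_r = 0`. This
works over any coefficient ring, in particular over every `𝔽_p`, and independence over `𝔽_p[x]`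
inside `𝔽_p⟦x⟧ ⊆ 𝔽_p⸨x⸩` is independence over its fraction field `𝔽_p(x)`.
-/

noncomputable section

open scoped RatFunc

open Polynomial Set

theorem Nat.eq_of_two_pow_mem_Icc {b k D : ℕ} (hD : 2 * D < 2 ^ k)
    (h : 2 ^ b ∈ Icc (2 ^ k - D) (2 ^ k + D)) : b = k := by
  obtain ⟨h₁, h₂⟩ := h
  rcases lt_trichotomy b k with hbk | rfl | hkb
  · have : 2 ^ (b + 1) ≤ 2 ^ k := Nat.pow_le_pow_right two_pos hbk
    rw [pow_succ] at this
    omega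
  · rfl
  · have : 2 ^ (k + 1) ≤ 2 ^ b := Nat.pow_le_pow_right two_pos hkb
    rw [pow_succ] at this
    omega

theorem Set.Infinite.diff_biUnion {α ι : Type*} {K : ι → Set α} {i : ι} {s : Finset ι}
    (hi : (K i).Infinite) (hfin : ∀ j ∈ s, (K i ∩ K j).Finite) :
    (K i \ ⋃ j ∈ s, K j).Infinite := by
  refine (hi.sdiff (s.finite_toSet.biUnion hfin)).mono ?_
  rintro x ⟨hx, hx'⟩
  simp only [Set.mem_iUnion, Finset.mem_coe, Set.mem_inter_iff, not_exists, not_and] at hx'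
  simpa [hx] using hx'

def prefixCode {α : Type*} [Encodable α] (σ : ℕ → α) (n : ℕ) : ℕ :=
  Encodable.encode ((List.range n).map σ)

theorem prefixCode_eq_prefixCode_iff {α : Type*} [Encodable α] {σ τ : ℕ → α} {n m : ℕ} :
    prefixCode σ n = prefixCode τ m ↔ n = m ∧ ∀ i < n, σ i = τ i := by
  rw [prefixCode, prefixCode, Encodable.encode_inj]
  constructor
  · intro h
    obtain rfl : n = m := by simpa using congrArg List.length h
    simpa using List.map_inj_left.mp h
  · rintro ⟨rfl, h⟩
    exact List.map_inj_left.mpr (by simpa using h)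

theorem exists_almostDisjoint_family {α : Type*} (hα : Cardinal.mk α ≤ Cardinal.continuum) :
    ∃ K : α → Set ℕ, (∀ a, (K a).Infinite) ∧ Pairwise fun a b => (K a ∩ K b).Finite := by
  obtain ⟨σ⟩ : Nonempty (α ↪ (ℕ → Bool)) := by
    rw [← Cardinal.lift_mk_le']
    simpa [← Cardinal.power_def, Cardinal.mk_bool] using hα
  refine ⟨fun a => range (prefixCode (σ a)), fun a => infinite_range_of_injective fun n m h =>
    (prefixCode_eq_prefixCode_iff.mp h).1, fun a b hab => ?_⟩
  obtain ⟨N, hN⟩ := Function.ne_iff.mp (σ.injective.ne hab)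
  refine ((finite_Iic N).image (prefixCode (σ a))).subset ?_
  rintro _ ⟨⟨n, rfl⟩, m, hm⟩
  obtain ⟨rfl, h⟩ := prefixCode_eq_prefixCode_iff.mp hm.symm
  exact mem_image_of_mem _ (not_lt.mp fun hNn => hN (h N hNn))

namespace PowerSeries

open scoped Classical

section Semiring

variable (R : Type*) [Semiring R]

def indicator (S : Set ℕ) : PowerSeries R :=
  mk (S.indicator 1)

variable {R}

@[simp]
theorem coeff_indicator (S : Set ℕ) (n : ℕ) :
    coeff n (indicator R S) = if n ∈ S then 1 else 0 := by
  simp [indicator, Set.indicator_apply]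

theorem map_indicator {A : Type*} [Semiring A] (f : R →+* A) (S : Set ℕ) :
    map f (indicator R S) = indicator A S := by
  ext n
  simp [apply_ite f]

theorem coeff_polynomial_mul_indicator {q : R[X]} {S : Set ℕ} {e d : ℕ}
    (hS : ∀ m ∈ S, m ≤ e + d → e + d ≤ m + q.natDegree → m = e) :
    coeff (e + d) ((q : PowerSeries R) * indicator R S) = if e ∈ S then q.coeff d else 0 := by
  rw [coeff_mul, Finset.sum_eq_single_of_mem (d, e) (by simp [add_comm])]
  · simp
  rintro ⟨k, m⟩ hkm hne
  rw [Finset.HasAntidiagonal.mem_antidiagonal] at hkm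
  simp only [Polynomial.coeff_coe, coeff_indicator, mul_ite, mul_one, mul_zero, ite_eq_right_iff]
  intro hm
  by_contra hk
  have hme := hS m hm (by omega) (by have := le_natDegree_of_ne_zero hk; omega)
  exact hne (by simp only [Prod.mk.injEq]; omega)

end Semiring

variable {R ι : Type*} [CommRing R]

theorem linearIndependent_indicator {S : ι → Set ℕ}
    (hS : ∀ s : Finset ι, ∀ i ∈ s, ∀ D : ℕ,
      ∃ e ∈ S i, ∀ j ∈ s, ∀ m ∈ S j, m ∈ Icc (e - D) (e + D) → j = i ∧ m = e) :
    LinearIndependent R[X] fun i => indicator R (S i) := by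
  rw [linearIndependent_iff']
  intro s q hsum i hi
  by_contra hqi
  set D := s.sup fun j => (q j).natDegree
  have hD : ∀ j ∈ s, (q j).natDegree ≤ D := fun j hj =>
    Finset.le_sup (f := fun j => (q j).natDegree) hj
  obtain ⟨e, he, hiso⟩ := hS s i hi D
  have hcoeff : ∀ j ∈ s, coeff (e + (q i).natDegree) ((q j : PowerSeries R) * indicator R (S j)) =
      if e ∈ S j then (q j).coeff (q i).natDegree else 0 := fun j hj =>
    coeff_polynomial_mul_indicator fun m hm h₁ h₂ =>
      (hiso j hj m hm ⟨by have := hD j hj; omega, by have := hD i hi; omega⟩).2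
  have hsmul : ∀ j, q j • indicator R (S j) = (q j : PowerSeries R) * indicator R (S j) :=
    fun _ => rfl
  -- Only `j = i` and `x^(deg q i) * x^e` contribute to the coefficient of `x^(e + deg q i)`.
  have hlead := congrArg (coeff (e + (q i).natDegree)) hsum
  simp only [hsmul, map_sum, map_zero] at hlead
  rw [Finset.sum_congr rfl hcoeff, Finset.sum_eq_single_of_mem i hi, if_pos he] at hlead
  · exact leadingCoeff_ne_zero.mpr hqi hlead
  · intro j hj hji
    rw [if_neg fun hej => hji (hiso j hj e hej ⟨by omega, by omega⟩).1]

theorem linearIndependent_indicator_image_two_pow {K : ι → Set ℕ} (hinf : ∀ i, (K i).Infinite)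
    (hdisj : Pairwise fun i j => (K i ∩ K j).Finite) :
    LinearIndependent R[X] fun i => indicator R ((2 ^ ·) '' K i) := by
  refine linearIndependent_indicator fun s i hi D => ?_
  obtain ⟨k, ⟨hk, hks⟩, hDk⟩ := ((hinf i).diff_biUnion (s := s.erase i)
    fun j hj => hdisj (Finset.ne_of_mem_erase hj).symm).exists_gt (2 * D)
  refine ⟨2 ^ k, mem_image_of_mem _ hk, ?_⟩
  rintro j hj _ ⟨b, hb, rfl⟩ hbD
  obtain rfl := Nat.eq_of_two_pow_mem_Icc (hDk.trans k.lt_two_pow_self) hbD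
  refine ⟨?_, rfl⟩
  by_contra hji
  exact hks (mem_biUnion (Finset.mem_erase.mpr ⟨hji, hj⟩) hb)

end PowerSeries

theorem linearIndependent_ratFunc_ofPowerSeries {F ι : Type*} [Field F] {f : ι → PowerSeries F}
    (hf : LinearIndependent F[X] f) :
    LinearIndependent (RatFunc F) fun i => HahnSeries.ofPowerSeries ℤ F (f i) := by
  refine (LinearIndependent.iff_fractionRing F[X] (RatFunc F)).mp ?_
  exact hf.map_of_injective_injective id (HahnSeries.ofPowerSeries ℤ F).toAddMonoidHom
    (fun _ => id) (fun _ h => HahnSeries.ofPowerSeries_injective (h.trans (map_zero _).symm))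
    fun q g => by
      rw [id, Algebra.smul_def, Algebra.smul_def]
      exact map_mul (HahnSeries.ofPowerSeries ℤ F) _ _

/-- **Proposition 3.13.** There is a family `(g_r)_{r ∈ ℝ}` of integral power series, indexed by
the continuum, whose reductions modulo any prime `p`, viewed in the Laurent series field
`𝔽_p⸨x⸩`, are linearly independent over the rational function field `𝔽_p(x)`. -/
theorem exists_continuum_family_linearIndependent_mod_all_primes :
    ∃ g : ℝ → PowerSeries ℤ, ∀ (p : ℕ) [Fact p.Prime],
      LinearIndependent (RatFunc (ZMod p)) fun r : ℝ =>
        HahnSeries.ofPowerSeries ℤ (ZMod p)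
          (PowerSeries.map (Int.castRingHom (ZMod p)) (g r)) := by
  obtain ⟨K, hinf, hdisj⟩ := exists_almostDisjoint_family Cardinal.mk_real.le
  refine ⟨fun r => PowerSeries.indicator ℤ ((2 ^ ·) '' K r), fun p _ => ?_⟩
  simp only [PowerSeries.map_indicator]
  exact linearIndependent_ratFunc_ofPowerSeries
    (PowerSeries.linearIndependent_indicator_image_two_pow hinf hdisj)
end
end

section
/- Let L = C ⋉ ℤ[t,t⁻¹] be the integral lamplighter group and let φ: ℤ[t,t⁻¹] → ℤ⟦x⟧ be the ring homomorphism determined by φ(t) = 1 + x. Then the pronilpotent completion L̂ is isomorphic to the semidirect product C ⋉ ℤ⟦x⟧, where the generator t of C acts on the additive group of ℤ⟦x⟧ by multiplication by 1 + x, via an isomorphism under which the canonical map L → L̂ corresponds to the homomorphism C ⋉ ℤ[t,t⁻¹] → C ⋉ ℤ⟦x⟧ given by the identity on C and by φ on ℤ[t,t⁻¹]. -/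
/-!
For a unit `u` of a commutative ring `R`, let `C` act on `R` by multiplication by `u`. Commutators
in `C ⋉ R` are `⁅(a, m), (b, k)⁆ = ((1 - u^k) a + (u^m - 1) b, 0)`, so for `n ≥ 1` the term
`γ_{n+1}` of the lower central series is the subgroup `(u - 1)^n R` of `R`, and
`L/γ_{n+1} = C ⋉ ℤ[t,t⁻¹]/(t - 1)^n`. Substituting `x = t - 1` into the truncation below degree
`n` gives ring homomorphisms `ℤ⟦x⟧ → ℤ[t,t⁻¹]/(t - 1)^n`, compatible in `n`, which invert `φ`
modulo `x^n`. They assemble into a homomorphism `C ⋉ ℤ⟦x⟧ → L̂`, which is bijective because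
`φ` maps the `(t - 1)`-adic filtration into the `x`-adic one and `ℤ⟦x⟧` is `x`-adically
separated and complete.
-/

noncomputable section

open Subgroup

/-- An abelian group `A` is cotorsion if `Ext¹_ℤ(ℚ, A) = 0`. -/
def IsCotorsion (A : Type) [AddCommGroup A] : Prop :=
  Subsingleton (((Ext ℤ (ModuleCat ℤ) 1).obj
    (Opposite.op (ModuleCat.of ℤ ℚ))).obj (ModuleCat.of ℤ A))

variable {Γ Γ' : Type} [Group Γ] [Group Γ']

/-- The subgroup `[U, Γ]` of `U ∩ [Γ, Γ]`, for a normal subgroup `U ≤ Γ`. -/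
def hopfRel (U : Subgroup Γ) : Subgroup ↥(U ⊓ commutator Γ) :=
  (⁅U, (⊤ : Subgroup Γ)⁆).subgroupOf (U ⊓ commutator Γ)

instance hopfRel_normal (U : Subgroup Γ) [U.Normal] : (hopfRel U).Normal :=
  Subgroup.normal_subgroupOf

/-- The Hopf quotient `(U ∩ [Γ,Γ])/[U,Γ]` of a normal subgroup `U ≤ Γ`. -/
def HopfQuot (U : Subgroup Γ) [U.Normal] : Type :=
  ↥(U ⊓ commutator Γ) ⧸ hopfRel U

open scoped commutatorElement in
instance HopfQuot.commGroup (U : Subgroup Γ) [U.Normal] : CommGroup (HopfQuot U) :=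
  { (inferInstanceAs (Group (↥(U ⊓ commutator Γ) ⧸ hopfRel U)) :
      Group (↥(U ⊓ commutator Γ) ⧸ hopfRel U)) with
    mul_comm := by
      intro a b
      obtain ⟨x, rfl⟩ := QuotientGroup.mk_surjective a
      obtain ⟨y, rfl⟩ := QuotientGroup.mk_surjective b
      change ((x : ↥(U ⊓ commutator Γ) ⧸ hopfRel U) * (y : ↥(U ⊓ commutator Γ) ⧸ hopfRel U))
        = (y : ↥(U ⊓ commutator Γ) ⧸ hopfRel U) * (x : ↥(U ⊓ commutator Γ) ⧸ hopfRel U)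
      rw [← QuotientGroup.mk_mul, ← QuotientGroup.mk_mul, QuotientGroup.eq]
      rw [hopfRel, Subgroup.mem_subgroupOf]
      have hxy : ((((x * y)⁻¹ * (y * x) : ↥(U ⊓ commutator Γ))) : Γ)
          = ⁅((y : Γ))⁻¹, ((x : Γ))⁻¹⁆ := by
        push_cast
        rw [commutatorElement_def]
        group
      rw [hxy]
      exact Subgroup.commutator_mem_commutator
        (inv_mem (Subgroup.mem_inf.mp y.2).1) (Subgroup.mem_top _) }

/-- The homomorphism of Hopf quotients induced by a homomorphism `Φ : Γ →* Γ'` with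
`Φ(U) ≤ U'`. -/
def hopfMap {U : Subgroup Γ} {U' : Subgroup Γ'} [U.Normal] [U'.Normal]
    (Φ : Γ →* Γ') (h : Subgroup.map Φ U ≤ U') : HopfQuot U →* HopfQuot U' :=
  QuotientGroup.lift (hopfRel U)
    ((QuotientGroup.mk' (hopfRel U')).comp
      ((Φ.comp (U ⊓ commutator Γ).subtype).codRestrict (U' ⊓ commutator Γ')
        (fun x => by
          refine Subgroup.mem_inf.mpr ⟨h (Subgroup.mem_map_of_mem Φ (Subgroup.mem_inf.mp x.2).1), ?_⟩
          have h1 := Subgroup.mem_map_of_mem Φ (Subgroup.mem_inf.mp x.2).2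
          have h2 : Subgroup.map Φ (_root_.commutator Γ) ≤ _root_.commutator Γ' := by
            rw [_root_.commutator_def (G := Γ'), _root_.commutator_def (G := Γ),
              Subgroup.map_commutator]
            exact Subgroup.commutator_mono le_top le_top
          exact h2 h1)))
    (by
      intro x hx
      have h1 := Subgroup.mem_map_of_mem Φ (Subgroup.mem_subgroupOf.mp hx)
      rw [Subgroup.map_commutator] at h1
      exact MonoidHom.mem_ker.mpr ((QuotientGroup.eq_one_iff _).mpr
        (Subgroup.mem_subgroupOf.mpr (Subgroup.commutator_mono h le_top h1))))

/-- The second integral homology `H₂(G;ℤ)` of a group `G`, defined via the Hopf formula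
`H₂(G) = (R ∩ [F,F])/[R,F]` for the canonical free presentation `F = FreeGroup G ↠ G`. -/
def H2 (G : Type) [Group G] : Type :=
  HopfQuot (MonoidHom.ker (FreeGroup.lift (id : G → G)))

instance (G : Type) [Group G] : CommGroup (H2 G) :=
  inferInstanceAs (CommGroup (HopfQuot (MonoidHom.ker (FreeGroup.lift (id : G → G)))))

/-- Functoriality of `H₂`: the map induced on second homology by a group homomorphism. -/
def H2Map {G H : Type} [Group G] [Group H] (f : G →* H) : H2 G →* H2 H :=
  hopfMap (FreeGroup.map f)
    (by
      have key : (FreeGroup.lift (id : H → H)).comp (FreeGroup.map f)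
          = f.comp (FreeGroup.lift (id : G → G)) := by
        apply FreeGroup.ext_hom
        intro a
        simp [FreeGroup.map.of, FreeGroup.lift_apply_of]
      rintro _ ⟨x, hx, rfl⟩
      rw [SetLike.mem_coe, MonoidHom.mem_ker] at hx
      rw [MonoidHom.mem_ker]
      have : (FreeGroup.lift (id : H → H)) ((FreeGroup.map f) x)
          = f ((FreeGroup.lift (id : G → G)) x) := DFunLike.congr_fun key x
      rw [this, hx, map_one])

/-- The transition map `G/γ_{n+2}(G) → G/γ_{n+1}(G)` (in Mathlib's indexing,
`Subgroup.lowerCentralSeries (⊤ : Subgroup G) n = γ_{n+1}(G)`). -/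
def nilpTransition (G : Type) [Group G] (n : ℕ) :
    G ⧸ Subgroup.lowerCentralSeries (⊤ : Subgroup G) (n + 1) →* G ⧸ Subgroup.lowerCentralSeries (⊤ : Subgroup G) n :=
  QuotientGroup.map _ _ (MonoidHom.id G)
    (fun x hx => Subgroup.lowerCentralSeries_antitone ⊤ (Nat.le_succ n) hx)

/-- The pronilpotent completion `Ĝ = lim_n G/γ_n(G)`, realized as the subgroup of compatible
families in `∏_n G/γ_n(G)`. -/
def PronilpotentCompletion (G : Type) [Group G] :
    Subgroup (∀ n : ℕ, G ⧸ Subgroup.lowerCentralSeries (⊤ : Subgroup G) n) where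
  carrier := {x | ∀ n, nilpTransition G n (x (n + 1)) = x n}
  one_mem' := fun n => by rw [Pi.one_apply, Pi.one_apply, map_one]
  mul_mem' := fun ha hb n => by
    rw [Pi.mul_apply, Pi.mul_apply, map_mul, ha n, hb n]
  inv_mem' := fun ha n => by
    rw [Pi.inv_apply, Pi.inv_apply, map_inv, ha n]

/-- The canonical homomorphism `G → Ĝ`. -/
def toPronilpotentCompletion (G : Type) [Group G] : G →* ↥(PronilpotentCompletion G) :=
  (Pi.monoidHom fun n => QuotientGroup.mk' (Subgroup.lowerCentralSeries (⊤ : Subgroup G) n)).codRestrict _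
    (fun g n => by
      show nilpTransition G n (QuotientGroup.mk g) = QuotientGroup.mk g
      rfl)

/-- The homomorphism `Ĝ → Ĥ` of pronilpotent completions induced by `f : G →* H`. -/
def pronilpotentCompletionMap {G H : Type} [Group G] [Group H] (f : G →* H) :
    ↥(PronilpotentCompletion G) →* ↥(PronilpotentCompletion H) :=
  ((Pi.monoidHom fun n =>
      (QuotientGroup.map (Subgroup.lowerCentralSeries (⊤ : Subgroup G) n) (Subgroup.lowerCentralSeries (⊤ : Subgroup H) n) f
        (fun x hx => lowerCentralSeries.map f n (Subgroup.mem_map_of_mem f hx))).comp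
        ((Pi.evalMonoidHom _ n).comp (PronilpotentCompletion G).subtype)).codRestrict _
    (fun x n => by
      have square : ∀ y : G ⧸ Subgroup.lowerCentralSeries (⊤ : Subgroup G) (n + 1),
          nilpTransition H n
            (QuotientGroup.map (Subgroup.lowerCentralSeries (⊤ : Subgroup G) (n+1)) (Subgroup.lowerCentralSeries (⊤ : Subgroup H) (n+1)) f
              (fun z hz => lowerCentralSeries.map f (n+1) (Subgroup.mem_map_of_mem f hz)) y)
          = QuotientGroup.map (Subgroup.lowerCentralSeries (⊤ : Subgroup G) n) (Subgroup.lowerCentralSeries (⊤ : Subgroup H) n) f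
              (fun z hz => lowerCentralSeries.map f n (Subgroup.mem_map_of_mem f hz))
              (nilpTransition G n y) := by
        intro y
        obtain ⟨g, rfl⟩ := QuotientGroup.mk_surjective y
        rfl
      exact (square (x.1 (n + 1))).trans (congrArg _ (x.2 n))))

noncomputable section

/-- Multiplication by `t` as an additive automorphism of `ℤ[t,t⁻¹]`. -/
def tMul : LaurentPolynomial ℤ ≃+ LaurentPolynomial ℤ :=
  AddEquiv.mk'
    ⟨fun f => LaurentPolynomial.T 1 * f, fun f => LaurentPolynomial.T (-1) * f,
      fun f => by
        show LaurentPolynomial.T (-1) * (LaurentPolynomial.T 1 * f) = f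
        rw [← mul_assoc, ← LaurentPolynomial.T_add]
        norm_num,
      fun f => by
        show LaurentPolynomial.T 1 * (LaurentPolynomial.T (-1) * f) = f
        rw [← mul_assoc, ← LaurentPolynomial.T_add]
        norm_num⟩
    (fun x y => mul_add _ x y)

/-- The integral lamplighter group `L = ℤ ≀ ℤ = C ⋉ ℤ[t,t⁻¹]`, where the generator `t` of the
infinite cyclic group `C` acts by multiplication by `t`. -/
abbrev Lamplighter : Type :=
  SemidirectProduct (Multiplicative (LaurentPolynomial ℤ)) (Multiplicative ℤ)
    (zpowersHom (MulAut (Multiplicative (LaurentPolynomial ℤ)))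
      (AddEquiv.toMultiplicative tMul))

/-- The unit `1 + x` of `ℤ⟦x⟧`. -/
def onePlusX : (PowerSeries ℤ)ˣ where
  val := 1 + PowerSeries.X
  inv := PowerSeries.invOfUnit (1 + PowerSeries.X) 1
  val_inv := PowerSeries.mul_invOfUnit _ _ (by simp)
  inv_val := by
    rw [mul_comm]
    exact PowerSeries.mul_invOfUnit _ _ (by simp)

/-- Multiplication by `1 + x` as an additive automorphism of `ℤ⟦x⟧`. -/
def onePlusXMul : PowerSeries ℤ ≃+ PowerSeries ℤ :=
  AddEquiv.mk'
    ⟨fun f => (1 + PowerSeries.X) * f, fun f => (↑onePlusX⁻¹ : PowerSeries ℤ) * f,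
      fun f => by
        show (↑onePlusX⁻¹ : PowerSeries ℤ) * ((1 + PowerSeries.X) * f) = f
        rw [← mul_assoc]
        have h : (↑onePlusX⁻¹ : PowerSeries ℤ) * (1 + PowerSeries.X) = 1 := by
          rw [mul_comm]; exact onePlusX.val_inv
        rw [h, one_mul],
      fun f => by
        show (1 + PowerSeries.X) * ((↑onePlusX⁻¹ : PowerSeries ℤ) * f) = f
        rw [← mul_assoc]
        have h : (1 + PowerSeries.X) * (↑onePlusX⁻¹ : PowerSeries ℤ) = 1 := onePlusX.val_inv
        rw [h, one_mul]⟩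
    (fun x y => mul_add _ x y)

/-- `C ⋉ ℤ⟦x⟧`, where the generator `t` of `C` acts by multiplication by `1 + x`. -/
abbrev LamplighterCompleted : Type :=
  SemidirectProduct (Multiplicative (PowerSeries ℤ)) (Multiplicative ℤ)
    (zpowersHom (MulAut (Multiplicative (PowerSeries ℤ)))
      (AddEquiv.toMultiplicative onePlusXMul))

theorem Units.sub_one_dvd_zpow_sub_one {R : Type} [CommRing R] (u : Rˣ) (k : ℤ) :
    (u : R) - 1 ∣ ((u ^ k : Rˣ) : R) - 1 := by
  obtain ⟨n, rfl | rfl⟩ := k.eq_nat_or_neg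
  · simpa using sub_one_dvd_pow_sub_one (u : R) n
  · rw [zpow_neg]
    have h : (((u ^ (n : ℤ))⁻¹ : Rˣ) : R) - 1 =
        -(((u ^ (n : ℤ))⁻¹ : Rˣ) : R) * (((u ^ (n : ℤ) : Rˣ) : R) - 1) := by
      linear_combination (u ^ (n : ℤ)).inv_mul
    rw [h]
    simpa using (sub_one_dvd_pow_sub_one (u : R) n).mul_left _

theorem Units.apply_zpow_eq_of_apply_eq {R R' S : Type} [Semiring R] [Semiring R'] [Semiring S]
    {u : Rˣ} {u' : R'ˣ} (ρ : R' →+* S) (σ : R →+* S) (hρ : ρ u' = σ u) (k : ℤ) :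
    ρ ↑(u' ^ k) = σ ↑(u ^ k) := by
  have hunit : Units.map (ρ : R' →* S) u' = Units.map (σ : R →* S) u := Units.ext hρ
  calc ρ ↑(u' ^ k) = ↑(Units.map (ρ : R' →* S) u' ^ k) := by rw [← map_zpow]; rfl
    _ = σ ↑(u ^ k) := by rw [hunit, ← map_zpow]; rfl

theorem LaurentPolynomial.ringHom_ext_int {S : Type} [Ring S]
    {f g : LaurentPolynomial ℤ →+* S} (h : f (T 1) = g (T 1)) : f = g := by
  refine IsLocalization.ringHom_ext (Submonoid.powers (Polynomial.X : Polynomial ℤ)) ?_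
  refine Polynomial.ringHom_ext (fun a ↦ ?_) ?_
  · simp only [eq_intCast, map_intCast]
  · simpa only [RingHom.coe_comp, Function.comp_apply, algebraMap_eq_toLaurent,
      Polynomial.toLaurent_X] using h

theorem PronilpotentCompletion.ext_succ {G : Type} [Group G] {x y : PronilpotentCompletion G}
    (h : ∀ n, x.1 (n + 1) = y.1 (n + 1)) : x = y := by
  refine Subtype.ext (funext fun n ↦ ?_)
  cases n with
  | zero => exact @Subsingleton.elim _ QuotientGroup.subsingleton_quotient_top _ _
  | succ n => exact h n

namespace PowerSeries

variable {R S : Type} [CommRing R] [CommRing S] [Algebra R S]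

theorem _root_.Polynomial.aeval_X_eq_coe (p : Polynomial R) :
    Polynomial.aeval (X : R⟦X⟧) p = p := by
  rw [Polynomial.aeval_def, ← Polynomial.eval₂_C_X_eq_coe]
  rfl

theorem _root_.Polynomial.X_pow_dvd_sub_trunc (n : ℕ) (p : Polynomial R) :
    Polynomial.X ^ n ∣ p - trunc n (p : R⟦X⟧) := by
  rw [Polynomial.X_pow_dvd_iff]
  intro d hd
  rw [Polynomial.coeff_sub, coeff_trunc, if_pos hd, Polynomial.coeff_coe, sub_self]

theorem X_pow_dvd_sub_trunc (n : ℕ) (f : R⟦X⟧) : X ^ n ∣ f - (trunc n f : R⟦X⟧) :=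
  ⟨_, sub_eq_iff_eq_add.mpr (eq_X_pow_mul_shift_add_trunc n f)⟩

theorem eq_zero_of_forall_X_pow_dvd {f : R⟦X⟧} (h : ∀ n, X ^ n ∣ f) : f = 0 := by
  ext m
  simpa using X_pow_dvd_iff.mp (h (m + 1)) m m.lt_succ_self

theorem coeff_eq_of_X_pow_dvd_succ_sub {g : ℕ → R⟦X⟧}
    (hg : ∀ n, X ^ (n + 1) ∣ g (n + 1) - g n) {m n : ℕ} (hmn : m ≤ n) :
    coeff m (g n) = coeff m (g m) := by
  induction n, hmn using Nat.le_induction with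
  | base => rfl
  | succ n hmn ih =>
    have := (X_pow_dvd_iff.mp (hg n)) m (by omega)
    rwa [map_sub, sub_eq_zero, ih] at this

theorem exists_X_pow_dvd_sub (g : ℕ → R⟦X⟧) (hg : ∀ n, X ^ (n + 1) ∣ g (n + 1) - g n) :
    ∃ f : R⟦X⟧, ∀ n, X ^ (n + 1) ∣ f - g n := by
  refine ⟨mk fun i ↦ coeff i (g i), fun n ↦ X_pow_dvd_iff.mpr fun m hm ↦ ?_⟩
  rw [map_sub, coeff_mk, coeff_eq_of_X_pow_dvd_succ_sub hg (Nat.lt_succ_iff.mp hm), sub_self]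

theorem mk_aeval_trunc_coe (s : S) (n : ℕ) (p : Polynomial R) :
    Ideal.Quotient.mk (Ideal.span {s ^ n}) (Polynomial.aeval s (trunc n (p : R⟦X⟧))) =
      Ideal.Quotient.mk _ (Polynomial.aeval s p) := by
  obtain ⟨q, hq⟩ := Polynomial.X_pow_dvd_sub_trunc n p
  rw [eq_comm, Ideal.Quotient.eq, ← map_sub, hq, map_mul, map_pow, Polynomial.aeval_X]
  exact Ideal.mul_mem_right _ _ (Ideal.mem_span_singleton_self _)

/-- Substitution of `s` for `X`, which makes sense modulo `s ^ n` since only the truncation below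
degree `n` matters there. -/
def evalModPow (s : S) (n : ℕ) : R⟦X⟧ →+* S ⧸ Ideal.span {s ^ n} where
  toFun f := Ideal.Quotient.mk _ (Polynomial.aeval s (trunc n f))
  map_one' := by
    rw [← Polynomial.coe_one, mk_aeval_trunc_coe, map_one, map_one]
  map_mul' f g := by
    rw [← trunc_trunc_mul_trunc, ← Polynomial.coe_mul, mk_aeval_trunc_coe, map_mul, map_mul]
  map_zero' := by simp
  map_add' f g := by simp

theorem evalModPow_apply (s : S) (n : ℕ) (f : R⟦X⟧) :
    evalModPow s n f = Ideal.Quotient.mk _ (Polynomial.aeval s (trunc n f)) :=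
  rfl

theorem evalModPow_coe (s : S) (n : ℕ) (p : Polynomial R) :
    evalModPow s n (p : R⟦X⟧) = Ideal.Quotient.mk _ (Polynomial.aeval s p) :=
  mk_aeval_trunc_coe s n p

theorem evalModPow_X (s : S) (n : ℕ) : evalModPow s n (X : R⟦X⟧) = Ideal.Quotient.mk _ s := by
  rw [← Polynomial.coe_X, evalModPow_coe, Polynomial.aeval_X]

theorem evalModPow_eq_of_X_pow_dvd_sub (s : S) {n : ℕ} {f g : R⟦X⟧} (h : X ^ n ∣ f - g) :
    evalModPow s n f = evalModPow s n g := by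
  obtain ⟨q, hq⟩ := h
  rw [← sub_eq_zero, ← map_sub, hq, map_mul, map_pow, evalModPow_X, ← map_pow,
    Ideal.Quotient.eq_zero_iff_mem.mpr (Ideal.mem_span_singleton_self _), zero_mul]

theorem factor_evalModPow (s : S) {m n : ℕ} (hmn : m ≤ n) (f : R⟦X⟧) :
    Ideal.Quotient.factor (Ideal.span_singleton_le_span_singleton.mpr (pow_dvd_pow s hmn))
      (evalModPow s n f) = evalModPow s m f := by
  rw [evalModPow_apply, Ideal.Quotient.factor_mk, ← evalModPow_coe, evalModPow_apply,
    evalModPow_apply, trunc_trunc_of_le f hmn]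

theorem X_pow_dvd_of_evalModPow_eq_zero (φ : S →ₐ[R] R⟦X⟧) {s : S} (hφ : φ s = X)
    {n : ℕ} {f : R⟦X⟧} (h : evalModPow s n f = 0) : X ^ n ∣ f := by
  obtain ⟨q, hq⟩ := Ideal.mem_span_singleton.mp (Ideal.Quotient.eq_zero_iff_mem.mp h)
  have hcoe : φ (Polynomial.aeval s (trunc n f)) = (trunc n f : R⟦X⟧) := by
    rw [← Polynomial.aeval_algHom_apply, hφ, Polynomial.aeval_X_eq_coe]
  rw [hq, map_mul, map_pow, hφ] at hcoe
  have htrunc : X ^ n ∣ (trunc n f : R⟦X⟧) := hcoe ▸ dvd_mul_right _ _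
  simpa using dvd_add (X_pow_dvd_sub_trunc n f) htrunc

end PowerSeries

section CyclicSemidirect

variable {R : Type} [CommRing R]

abbrev CyclicSemidirect (τ : R ≃+ R) : Type :=
  SemidirectProduct (Multiplicative R) (Multiplicative ℤ)
    (zpowersHom (MulAut (Multiplicative R)) (AddEquiv.toMultiplicative τ))

namespace CyclicSemidirect

open Multiplicative
open scoped commutatorElement

variable {τ : R ≃+ R} {u : Rˣ}

theorem toAdd_act (hτ : ∀ a, τ a = u * a) (c : Multiplicative ℤ) (a : Multiplicative R) :
    toAdd (zpowersHom (MulAut (Multiplicative R)) (AddEquiv.toMultiplicative τ) c a) =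
      ↑(u ^ toAdd c) * toAdd a := by
  have hτ_symm (b : R) : τ.symm b = ↑u⁻¹ * b := by
    rw [AddEquiv.symm_apply_eq, hτ, Units.mul_inv_cancel_left]
  rw [zpowersHom_apply]
  induction toAdd c using Int.induction_on generalizing a with
  | zero => simp
  | succ k ih =>
    rw [zpow_add_one, MulAut.mul_apply, ih, zpow_add_one, Units.val_mul, mul_assoc]
    exact congrArg _ (hτ _)
  | pred k ih =>
    rw [zpow_sub_one, MulAut.mul_apply, ih, zpow_sub_one, Units.val_mul, mul_assoc]
    exact congrArg _ (hτ_symm _)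

theorem toAdd_mul_left (hτ : ∀ a, τ a = u * a) (g h : CyclicSemidirect τ) :
    toAdd (g * h).left = toAdd g.left + ↑(u ^ toAdd g.right) * toAdd h.left := by
  rw [SemidirectProduct.mul_left, toAdd_mul, toAdd_act hτ]

theorem toAdd_inv_left (hτ : ∀ a, τ a = u * a) (g : CyclicSemidirect τ) :
    toAdd g⁻¹.left = -(↑(u ^ toAdd g.right)⁻¹ * toAdd g.left) := by
  rw [SemidirectProduct.inv_left, toAdd_act hτ, toAdd_inv, toAdd_inv, zpow_neg, mul_neg]

theorem commutator_right (g h : CyclicSemidirect τ) : ⁅g, h⁆.right = 1 := by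
  simp [commutatorElement_def]

theorem toAdd_commutator_left (hτ : ∀ a, τ a = u * a) (g h : CyclicSemidirect τ) :
    toAdd ⁅g, h⁆.left = (1 - ↑(u ^ toAdd h.right)) * toAdd g.left +
      (↑(u ^ toAdd g.right) - 1) * toAdd h.left := by
  simp only [commutatorElement_def, toAdd_mul_left hτ, toAdd_inv_left hτ,
    SemidirectProduct.mul_right, SemidirectProduct.inv_right, toAdd_mul, toAdd_inv, zpow_add,
    zpow_neg, Units.val_mul]
  set v := u ^ toAdd g.right
  set w := u ^ toAdd h.right
  linear_combination (-(↑w * toAdd g.left + toAdd h.left)) * v.mul_inv +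
    (-(toAdd h.left * ↑v * ↑v⁻¹)) * w.mul_inv

variable (τ) in
def ofIdeal (I : Ideal R) : Subgroup (CyclicSemidirect τ) where
  carrier := {g | g.right = 1 ∧ toAdd g.left ∈ I}
  one_mem' := ⟨rfl, I.zero_mem⟩
  mul_mem' := by
    rintro g h ⟨hg, hgI⟩ ⟨hh, hhI⟩
    refine ⟨by rw [SemidirectProduct.mul_right, hg, hh, mul_one], ?_⟩
    rw [SemidirectProduct.mul_left, hg, map_one, MulAut.one_apply, toAdd_mul]
    exact I.add_mem hgI hhI
  inv_mem' := by
    rintro g ⟨hg, hgI⟩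
    refine ⟨by rw [SemidirectProduct.inv_right, hg, inv_one], ?_⟩
    rw [SemidirectProduct.inv_left, hg, inv_one, map_one, MulAut.one_apply, toAdd_inv]
    exact I.neg_mem hgI

theorem mem_ofIdeal {I : Ideal R} {g : CyclicSemidirect τ} :
    g ∈ ofIdeal τ I ↔ g.right = 1 ∧ toAdd g.left ∈ I :=
  Iff.rfl

theorem commutator_top_le (hτ : ∀ a, τ a = u * a) :
    ⁅(⊤ : Subgroup (CyclicSemidirect τ)), ⊤⁆ ≤
      ofIdeal τ (Ideal.span {((u : R) - 1) ^ 1}) := by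
  rw [Subgroup.commutator_le]
  intro g _ h _
  refine ⟨commutator_right g h, ?_⟩
  rw [toAdd_commutator_left hτ, pow_one, Ideal.mem_span_singleton, ← neg_sub _ (1 : R)]
  exact dvd_add ((u.sub_one_dvd_zpow_sub_one _).neg_right.mul_right _)
    ((u.sub_one_dvd_zpow_sub_one _).mul_right _)

theorem commutator_ofIdeal_le (hτ : ∀ a, τ a = u * a) (n : ℕ) :
    ⁅ofIdeal τ (Ideal.span {((u : R) - 1) ^ n}), ⊤⁆ ≤
      ofIdeal τ (Ideal.span {((u : R) - 1) ^ (n + 1)}) := by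
  rw [Subgroup.commutator_le]
  rintro g ⟨hg, hgI⟩ h -
  refine ⟨commutator_right g h, ?_⟩
  rw [toAdd_commutator_left hτ, hg, toAdd_one, zpow_zero, Units.val_one, sub_self, zero_mul,
    add_zero, Ideal.mem_span_singleton, pow_succ', ← neg_sub _ (1 : R)]
  exact mul_dvd_mul (u.sub_one_dvd_zpow_sub_one _).neg_right (Ideal.mem_span_singleton.mp hgI)

theorem ofIdeal_le_commutator (hτ : ∀ a, τ a = u * a) (n : ℕ) :
    ofIdeal τ (Ideal.span {((u : R) - 1) ^ (n + 1)}) ≤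
      ⁅ofIdeal τ (Ideal.span {((u : R) - 1) ^ n}), ⊤⁆ := by
  rintro g ⟨hg, hgI⟩
  obtain ⟨q, hq⟩ := Ideal.mem_span_singleton'.mp hgI
  have hcomm : g =
      ⁅(⟨ofAdd (-(q * ((u : R) - 1) ^ n)), 1⟩ : CyclicSemidirect τ),
        ⟨1, ofAdd 1⟩⁆ := by
    refine SemidirectProduct.ext ?_ (by rw [commutator_right, hg])
    apply toAdd.injective
    rw [toAdd_commutator_left hτ, ← hq]
    simp only [toAdd_ofAdd, toAdd_one, zpow_one, zpow_zero, Units.val_one]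
    ring
  rw [hcomm]
  exact Subgroup.commutator_mem_commutator
    ⟨rfl, neg_mem (Ideal.mul_mem_left _ _ (Ideal.mem_span_singleton_self _))⟩ trivial

theorem lowerCentralSeries_succ_eq (hτ : ∀ a, τ a = u * a) (n : ℕ) :
    Subgroup.lowerCentralSeries (⊤ : Subgroup (CyclicSemidirect τ)) (n + 1) =
      ofIdeal τ (Ideal.span {((u : R) - 1) ^ (n + 1)}) := by
  induction n with
  | zero =>
    exact (commutator_top_le hτ).antisymm
      ((ofIdeal_le_commutator hτ 0).trans (Subgroup.commutator_mono le_top le_rfl))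
  | succ n ih =>
    rw [Subgroup.lowerCentralSeries_succ, ih]
    exact (commutator_ofIdeal_le hτ _).antisymm (ofIdeal_le_commutator hτ _)

theorem mk_eq_mk_iff (hτ : ∀ a, τ a = u * a) {n : ℕ} {g h : CyclicSemidirect τ} :
    (g : CyclicSemidirect τ ⧸
        Subgroup.lowerCentralSeries (⊤ : Subgroup (CyclicSemidirect τ)) (n + 1)) = h ↔
      g.right = h.right ∧
        Ideal.Quotient.mk (Ideal.span {((u : R) - 1) ^ (n + 1)}) (toAdd g.left) =
          Ideal.Quotient.mk _ (toAdd h.left) := by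
  have hleft :
      toAdd (g⁻¹ * h).left = ↑(u ^ toAdd g.right)⁻¹ * -(toAdd g.left - toAdd h.left) := by
    rw [toAdd_mul_left hτ, toAdd_inv_left hτ, SemidirectProduct.inv_right, toAdd_inv, zpow_neg]
    ring
  rw [QuotientGroup.eq, lowerCentralSeries_succ_eq hτ, mem_ofIdeal, hleft, Ideal.Quotient.eq,
    Ideal.unit_mul_mem_iff_mem _ (Units.isUnit _), Ideal.neg_mem_iff, SemidirectProduct.mul_right,
    SemidirectProduct.inv_right, inv_mul_eq_one]

variable {R' : Type} [CommRing R'] {τ' : R' ≃+ R'} {u' : R'ˣ}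

def liftQuotient (hτ : ∀ a, τ a = u * a) (hτ' : ∀ a, τ' a = u' * a) {n : ℕ}
    (ρ : R' →+* R ⧸ Ideal.span {((u : R) - 1) ^ (n + 1)})
    (hρ : ρ u' = Ideal.Quotient.mk _ (u : R)) :
    CyclicSemidirect τ' →* CyclicSemidirect τ ⧸
      Subgroup.lowerCentralSeries (⊤ : Subgroup (CyclicSemidirect τ)) (n + 1) where
  -- by `mk_eq_mk_iff`, the class does not depend on the representative chosen by `out`
  toFun g := (⟨ofAdd (ρ (toAdd g.left)).out, g.right⟩ : CyclicSemidirect τ)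
  map_one' := (mk_eq_mk_iff hτ).mpr ⟨rfl, by simp⟩
  map_mul' g h := by
    rw [← QuotientGroup.mk_mul, mk_eq_mk_iff hτ]
    refine ⟨rfl, ?_⟩
    simp only [toAdd_mul_left hτ, toAdd_mul_left hτ', toAdd_ofAdd, map_add, map_mul,
      Ideal.Quotient.mk_out, Units.apply_zpow_eq_of_apply_eq ρ _ hρ]

theorem liftQuotient_eq_mk_iff (hτ : ∀ a, τ a = u * a) (hτ' : ∀ a, τ' a = u' * a) {n : ℕ}
    {ρ : R' →+* R ⧸ Ideal.span {((u : R) - 1) ^ (n + 1)}}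
    (hρ : ρ u' = Ideal.Quotient.mk _ (u : R))
    {g : CyclicSemidirect τ'} {h : CyclicSemidirect τ} :
    liftQuotient hτ hτ' ρ hρ g = h ↔
      g.right = h.right ∧ ρ (toAdd g.left) = Ideal.Quotient.mk _ (toAdd h.left) := by
  rw [liftQuotient, MonoidHom.coe_mk, OneHom.coe_mk, mk_eq_mk_iff hτ, toAdd_ofAdd,
    Ideal.Quotient.mk_out]

end CyclicSemidirect

end CyclicSemidirect

namespace Lamplighter

open LaurentPolynomial Multiplicative

def tUnit : (LaurentPolynomial ℤ)ˣ := (isUnit_T 1).unit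

theorem tUnit_val : (tUnit : LaurentPolynomial ℤ) = T 1 := rfl

theorem tMul_apply (a : LaurentPolynomial ℤ) : tMul a = ↑tUnit * a := rfl

theorem onePlusXMul_apply (f : PowerSeries ℤ) : onePlusXMul f = ↑onePlusX * f := rfl

abbrev evalTSubOne (n : ℕ) : PowerSeries ℤ →+*
    LaurentPolynomial ℤ ⧸ Ideal.span {((tUnit : LaurentPolynomial ℤ) - 1) ^ n} :=
  PowerSeries.evalModPow _ n

theorem evalTSubOne_onePlusX (n : ℕ) :
    evalTSubOne n ↑onePlusX = Ideal.Quotient.mk _ (tUnit : LaurentPolynomial ℤ) := by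
  rw [show (onePlusX : PowerSeries ℤ) = 1 + PowerSeries.X from rfl, map_add, map_one,
    PowerSeries.evalModPow_X, ← map_one (Ideal.Quotient.mk _), ← map_add, add_sub_cancel]

theorem evalTSubOne_comp {φ : LaurentPolynomial ℤ →+* PowerSeries ℤ}
    (hφ : φ (T 1) = 1 + PowerSeries.X) (n : ℕ) :
    (evalTSubOne n).comp φ = Ideal.Quotient.mk _ :=
  ringHom_ext_int (by rw [RingHom.comp_apply, hφ]; exact evalTSubOne_onePlusX n)

theorem X_pow_dvd_map_sub_map {φ : LaurentPolynomial ℤ →+* PowerSeries ℤ}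
    (hφ : φ (T 1) = 1 + PowerSeries.X) {n : ℕ} {a b : LaurentPolynomial ℤ}
    (h : Ideal.Quotient.mk (Ideal.span {((tUnit : LaurentPolynomial ℤ) - 1) ^ n}) a =
      Ideal.Quotient.mk _ b) :
    PowerSeries.X ^ n ∣ φ a - φ b := by
  obtain ⟨q, hq⟩ := Ideal.mem_span_singleton.mp (Ideal.Quotient.eq.mp h)
  rw [← map_sub, hq, map_mul, map_pow, map_sub, map_one, tUnit_val, hφ, add_sub_cancel_left]
  exact dvd_mul_right _ _

def toPowerSeries : LaurentPolynomial ℤ →ₐ[ℤ] PowerSeries ℤ :=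
  { eval₂ (Int.castRingHom _) onePlusX with commutes' := fun r ↦ by simp }

theorem toPowerSeries_T_one : toPowerSeries (T 1) = 1 + PowerSeries.X := by
  change eval₂ _ _ _ = _
  rw [eval₂_T, zpow_one]
  rfl

theorem X_pow_dvd_of_evalTSubOne_eq_zero {n : ℕ} {f : PowerSeries ℤ}
    (h : evalTSubOne n f = 0) : PowerSeries.X ^ n ∣ f :=
  PowerSeries.X_pow_dvd_of_evalModPow_eq_zero toPowerSeries
    (by rw [map_sub, map_one, tUnit_val, toPowerSeries_T_one, add_sub_cancel_left]) h

theorem exists_evalTSubOne_eq (a : ℕ → LaurentPolynomial ℤ)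
    (ha : ∀ n, Ideal.Quotient.mk (Ideal.span {((tUnit : LaurentPolynomial ℤ) - 1) ^ (n + 1)})
      (a (n + 1)) = Ideal.Quotient.mk _ (a n)) :
    ∃ f, ∀ n, evalTSubOne (n + 1) f = Ideal.Quotient.mk _ (a n) := by
  obtain ⟨f, hf⟩ := PowerSeries.exists_X_pow_dvd_sub (fun n ↦ toPowerSeries (a n))
    fun n ↦ X_pow_dvd_map_sub_map toPowerSeries_T_one (ha n)
  refine ⟨f, fun n ↦ ?_⟩
  rw [PowerSeries.evalModPow_eq_of_X_pow_dvd_sub _ (hf n)]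
  exact RingHom.congr_fun (evalTSubOne_comp toPowerSeries_T_one (n + 1)) (a n)

def completedToQuotient : (n : ℕ) → LamplighterCompleted →*
    Lamplighter ⧸ Subgroup.lowerCentralSeries (⊤ : Subgroup Lamplighter) n
  | 0 => 1
  | n + 1 => CyclicSemidirect.liftQuotient tMul_apply onePlusXMul_apply (evalTSubOne (n + 1))
      (evalTSubOne_onePlusX (n + 1))

theorem completedToQuotient_succ_eq_mk_iff {n : ℕ} {g : LamplighterCompleted} {h : Lamplighter} :
    completedToQuotient (n + 1) g = h ↔
      g.right = h.right ∧
        evalTSubOne (n + 1) (toAdd g.left) = Ideal.Quotient.mk _ (toAdd h.left) :=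
  CyclicSemidirect.liftQuotient_eq_mk_iff tMul_apply onePlusXMul_apply
    (evalTSubOne_onePlusX (n + 1))

theorem nilpTransition_completedToQuotient (n : ℕ) (g : LamplighterCompleted) :
    nilpTransition Lamplighter n (completedToQuotient (n + 1) g) = completedToQuotient n g := by
  cases n with
  | zero => exact @Subsingleton.elim _ QuotientGroup.subsingleton_quotient_top _ _
  | succ n =>
    obtain ⟨h, hh⟩ := QuotientGroup.mk_surjective (completedToQuotient (n + 2) g)
    obtain ⟨hright, hleft⟩ := completedToQuotient_succ_eq_mk_iff.mp hh.symm
    rw [← hh]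
    refine (completedToQuotient_succ_eq_mk_iff.mpr ⟨hright, ?_⟩).symm
    have := congrArg (Ideal.Quotient.factor (Ideal.span_singleton_le_span_singleton.mpr
      (pow_dvd_pow _ (n + 1).le_succ))) hleft
    rwa [PowerSeries.factor_evalModPow _ (n + 1).le_succ, Ideal.Quotient.factor_mk] at this

def completedToCompletion : LamplighterCompleted →* PronilpotentCompletion Lamplighter :=
  (MonoidHom.pi completedToQuotient).codRestrict _
    fun g n ↦ nilpTransition_completedToQuotient n g

theorem completedToCompletion_ofAdd {φ : LaurentPolynomial ℤ →+* PowerSeries ℤ}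
    (hφ : φ (T 1) = 1 + PowerSeries.X) (a : LaurentPolynomial ℤ) (c : Multiplicative ℤ) :
    completedToCompletion ⟨ofAdd (φ a), c⟩ =
      toPronilpotentCompletion Lamplighter ⟨ofAdd a, c⟩ :=
  PronilpotentCompletion.ext_succ fun n ↦ completedToQuotient_succ_eq_mk_iff.mpr
    ⟨rfl, RingHom.congr_fun (evalTSubOne_comp hφ (n + 1)) a⟩

theorem completedToCompletion_injective : Function.Injective completedToCompletion := by
  rw [injective_iff_map_eq_one]
  intro g hg
  have hlevel (n : ℕ) :=
    completedToQuotient_succ_eq_mk_iff.mp (congrFun (congrArg Subtype.val hg) (n + 1))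
  have hleft : toAdd g.left = 0 := PowerSeries.eq_zero_of_forall_X_pow_dvd fun n ↦
    (pow_dvd_pow _ n.le_succ).trans (X_pow_dvd_of_evalTSubOne_eq_zero (by
      rw [(hlevel n).2, SemidirectProduct.one_left, toAdd_one, map_zero]))
  exact SemidirectProduct.ext (toAdd.injective hleft) (hlevel 0).1

theorem completedToCompletion_surjective : Function.Surjective completedToCompletion := by
  intro x
  choose b hb using fun n ↦ QuotientGroup.mk_surjective (x.1 n)
  have hstep (n : ℕ) := (CyclicSemidirect.mk_eq_mk_iff tMul_apply).mp
    (show (QuotientGroup.mk (b (n + 2)) :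
        Lamplighter ⧸ Subgroup.lowerCentralSeries (⊤ : Subgroup Lamplighter) (n + 1)) =
          b (n + 1) by
      rw [hb (n + 1), ← x.2 (n + 1), ← hb (n + 2)]; rfl)
  have hright (n : ℕ) : (b (n + 1)).right = (b 1).right := by
    induction n with
    | zero => rfl
    | succ n ih => rw [(hstep n).1, ih]
  obtain ⟨f, hf⟩ :=
    exists_evalTSubOne_eq (fun n ↦ toAdd (b (n + 1)).left) fun n ↦ (hstep n).2
  refine ⟨⟨ofAdd f, (b 1).right⟩, PronilpotentCompletion.ext_succ fun n ↦ ?_⟩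
  rw [← hb]
  exact completedToQuotient_succ_eq_mk_iff.mpr ⟨(hright n).symm, hf n⟩

end Lamplighter

/-- **Lemma 4.1.** The pronilpotent completion of the integral lamplighter group `L = C ⋉ ℤ[t,t⁻¹]`
is `C ⋉ ℤ⟦x⟧` (with `t` acting by multiplication by `1 + x`), via an isomorphism under which the
canonical map `L → L̂` corresponds to the map `C ⋉ ℤ[t,t⁻¹] → C ⋉ ℤ⟦x⟧` which is the identity on
`C` and the ring homomorphism `φ` with `φ(t) = 1 + x` on `ℤ[t,t⁻¹]`. -/
theorem pronilpotentCompletion_lamplighter_iso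
    (φr : LaurentPolynomial ℤ →+* PowerSeries ℤ)
    (hφr : φr (LaurentPolynomial.T 1) = 1 + PowerSeries.X) :
    ∃ ψ : ↥(PronilpotentCompletion Lamplighter) ≃* LamplighterCompleted,
      ∀ (a : LaurentPolynomial ℤ) (n : ℤ),
        ψ (toPronilpotentCompletion Lamplighter
            ⟨Multiplicative.ofAdd a, Multiplicative.ofAdd n⟩)
          = ⟨Multiplicative.ofAdd (φr a), Multiplicative.ofAdd n⟩ := by
  let Θ := MulEquiv.ofBijective _ ⟨Lamplighter.completedToCompletion_injective,
    Lamplighter.completedToCompletion_surjective⟩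
  refine ⟨Θ.symm, fun a n ↦ ?_⟩
  rw [MulEquiv.symm_apply_eq]
  exact (Lamplighter.completedToCompletion_ofAdd hφr a _).symm
end
end
end

section
/- Let 𝔤 be a finitely generated Lie algebra over ℤ (generated as a Lie algebra by finitely many elements), with lower central series γ₁(𝔤) = 𝔤, γ_{n+1}(𝔤) = [γ_n(𝔤), 𝔤], and let 𝔤̂ = lim_n 𝔤/γ_n(𝔤) be its pronilpotent completion, realized as the Lie subalgebra of ∏_n 𝔤/γ_n(𝔤) consisting of families compatible with the natural projections, with canonical Lie algebra homomorphism η: 𝔤 → 𝔤̂. Then for every n ≥ 1 the map η induces an isomorphism 𝔤/γ_n(𝔤) ≅ 𝔤̂/γ_n(𝔤̂). In particular, η induces an isomorphism of abelianizations 𝔤/[𝔤,𝔤] ≅ 𝔤̂/[𝔤̂,𝔤̂]. -/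
noncomputable section

/-- Componentwise Lie ring structure on a product of Lie rings. -/
instance Pi.lieRing {ι : Type} (Lf : ι → Type) [∀ i, LieRing (Lf i)] :
    LieRing (∀ i, Lf i) :=
  { Pi.addCommGroup with
    bracket := fun x y => fun i => ⁅x i, y i⁆
    add_lie := fun x y z => funext fun i => add_lie (x i) (y i) (z i)
    lie_add := fun x y z => funext fun i => lie_add (x i) (y i) (z i)
    lie_self := fun x => funext fun i => lie_self (x i)
    leibniz_lie := fun x y z => funext fun i => leibniz_lie (x i) (y i) (z i) }

variable (L : Type) [LieRing L]

/-- The transition map `𝔤/γ_{n+2}(𝔤) → 𝔤/γ_{n+1}(𝔤)` between lower-central quotients of a Lie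
algebra over `ℤ` (in Mathlib's indexing, `lowerCentralSeries ℤ L L n = γ_{n+1}(L)`). -/
def lieNilpTransition (n : ℕ) :
    (L ⧸ LieModule.lowerCentralSeries ℤ L L (n + 1)) →ₗ⁅ℤ⁆
      (L ⧸ LieModule.lowerCentralSeries ℤ L L n) :=
  { toLinearMap := Submodule.mapQ _ _ LinearMap.id
      (fun x hx => LieModule.antitone_lowerCentralSeries ℤ L L (Nat.le_succ n) hx)
    map_lie' := by
      rintro ⟨x⟩ ⟨y⟩
      rfl }

/-- The pronilpotent completion `𝔤̂ = lim_n 𝔤/γ_n(𝔤)` of a Lie algebra over `ℤ`, realized as the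
Lie subalgebra of compatible families in `∏_n 𝔤/γ_n(𝔤)`. -/
def LiePronilpotentCompletion :
    LieSubalgebra ℤ (∀ n : ℕ, L ⧸ LieModule.lowerCentralSeries ℤ L L n) where
  carrier := {x | ∀ n, lieNilpTransition L n (x (n + 1)) = x n}
  add_mem' := fun ha hb n => by
    rw [Pi.add_apply, Pi.add_apply, map_add (lieNilpTransition L n), ha n, hb n]
  zero_mem' := fun n => by
    rw [Pi.zero_apply, Pi.zero_apply, map_zero (lieNilpTransition L n)]
  smul_mem' := fun c x hx n => by
    rw [Pi.smul_apply, Pi.smul_apply, map_smul (lieNilpTransition L n), hx n]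
  lie_mem' := fun {x y} hx hy n => by
    show lieNilpTransition L n ⁅x (n + 1), y (n + 1)⁆ = ⁅x n, y n⁆
    rw [LieHom.map_lie, hx n, hy n]

/-- The canonical Lie algebra homomorphism `η : 𝔤 → 𝔤̂`. -/
def toLiePronilpotentCompletion : L →ₗ⁅ℤ⁆ ↥(LiePronilpotentCompletion L) where
  toFun a :=
    ⟨fun n => LieSubmodule.Quotient.mk a, fun n => rfl⟩
  map_add' a b := Subtype.ext (funext fun n => by
    show LieSubmodule.Quotient.mk (a + b) = LieSubmodule.Quotient.mk a + LieSubmodule.Quotient.mk b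
    rfl)
  map_smul' c a := Subtype.ext (funext fun n => rfl)
  map_lie' := by
    intro a b
    exact Subtype.ext (funext fun n => rfl)

/-!
Write `γ k` for Mathlib's `lowerCentralSeries ℤ L L k`, so that `γ 0 = 𝔤` (the paper's `γ_{k+1}`).
The map `𝔤/γ k → 𝔤̂/γ k 𝔤̂` induced by `η` has as inverse the map induced by the projection
`𝔤̂ → 𝔤/γ k`, which kills `γ k 𝔤̂` because `𝔤/γ k` is nilpotent. That the two maps are mutually
inverse comes down to: an element of `𝔤̂` whose `k`-th component vanishes lies in `γ k 𝔤̂`.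
Such an element is the sum of a series `∑ vₙ` with `vₙ ∈ γ n` and `vₙ = 0` for `n < k`. Over a
finite generating set `S`, each `vₙ₊₁` is a sum `∑_{t ∈ S} ⁅t, w n t⁆` with `w n t ∈ γ n`, so the
series equals `∑_{t ∈ S} ⁅η t, ∑ₙ w n t⁆`: a finite sum of brackets with elements to which
induction on `k` applies. Finiteness of `S` is what makes this sum finite.
-/

open LieModule

section LowerCentralSeries

variable {R L M : Type*} [CommRing R] [LieRing L] [LieAlgebra R L] [LieRing M] [LieAlgebra R M]

lemma lowerCentralSeries_succ_le_iSup_map_ad {s : Set L} (hs : LieSubalgebra.lieSpan R L s = ⊤)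
    (j : ℕ) :
    (lowerCentralSeries R L L (j + 1)).toSubmodule ≤
      ⨆ t ∈ s, (lowerCentralSeries R L L j).toSubmodule.map (LieAlgebra.ad R L t) := by
  set V := ⨆ t ∈ s, (lowerCentralSeries R L L j).toSubmodule.map (LieAlgebra.ad R L t)
  rw [lowerCentralSeries_succ, LieSubmodule.lieIdeal_oper_eq_linear_span', Submodule.span_le]
  rintro - ⟨a, -, w, hw, rfl⟩
  have ha : a ∈ LieSubalgebra.lieSpan R L s := hs ▸ LieSubalgebra.mem_top a
  induction ha using LieSubalgebra.lieSpan_induction generalizing w with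
  | mem t ht =>
    exact (le_biSup (fun t => (lowerCentralSeries R L L j).toSubmodule.map (LieAlgebra.ad R L t))
      ht) ⟨w, hw, rfl⟩
  | zero => simp
  | add a b _ _ ha hb => rw [add_lie]; exact V.add_mem (ha w hw) (hb w hw)
  | smul r a _ ha => rw [smul_lie]; exact V.smul_mem r (ha w hw)
  | lie a b _ _ ha hb =>
    -- `⁅⁅a, b⁆, w⁆ = ⁅a, ⁅b, w⁆⁆ - ⁅b, ⁅a, w⁆⁆`: this is why the induction generalizes `w`.
    rw [lie_lie]
    exact V.sub_mem (ha _ ((lowerCentralSeries R L L j).lie_mem hw))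
      (hb _ ((lowerCentralSeries R L L j).lie_mem hw))

lemma exists_sum_lie_eq_of_mem_lowerCentralSeries_succ {S : Finset L}
    (hS : LieSubalgebra.lieSpan R L S = ⊤) {j : ℕ} {u : L}
    (hu : u ∈ lowerCentralSeries R L L (j + 1)) :
    ∃ w : L → L, (∀ t, w t ∈ lowerCentralSeries R L L j) ∧ ∑ t ∈ S, ⁅t, w t⁆ = u := by
  have hu' := lowerCentralSeries_succ_le_iSup_map_ad hS j hu
  simp only [Finset.mem_coe] at hu'
  obtain ⟨μ, hμ⟩ := (Submodule.mem_iSup_finset_iff_exists_sum _ u).mp hu'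
  choose w hw hμw using fun t => Submodule.mem_map.mp (μ t).2
  exact ⟨w, hw, hμ ▸ Finset.sum_congr rfl fun t _ => hμw t⟩

lemma lowerCentralSeries_quotient_lowerCentralSeries_eq_bot (k : ℕ) :
    lowerCentralSeries R (L ⧸ lowerCentralSeries R L L k) (L ⧸ lowerCentralSeries R L L k) k
      = ⊥ := by
  rw [← LieSubmodule.toSubmodule_eq_bot, ← coe_lowerCentralSeries_ideal_quot_eq,
    LieSubmodule.toSubmodule_eq_bot, ← map_lowerCentralSeries_eq k
      (LieSubmodule.Quotient.surjective_mk' _), LieSubmodule.Quotient.map_mk'_eq_bot_le]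

theorem exists_lieEquiv_quotient_lowerCentralSeries (f : L →ₗ⁅R⁆ M) {k : ℕ}
    (p : M →ₗ⁅R⁆ L ⧸ lowerCentralSeries R L L k)
    (hpf : ∀ a, p (f a) = LieSubmodule.Quotient.mk a)
    (hker : ∀ y, p y = 0 → y ∈ lowerCentralSeries R M M k) :
    ∃ e : (L ⧸ lowerCentralSeries R L L k) ≃ₗ⁅R⁆ (M ⧸ lowerCentralSeries R M M k),
      ∀ a, e (LieSubmodule.Quotient.mk a) = LieSubmodule.Quotient.mk (f a) := by
  have hf : (lowerCentralSeries R L L k).toSubmodule ≤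
      (lowerCentralSeries R M M k).toSubmodule.comap f.toLinearMap :=
    fun a ha => LieIdeal.map_lowerCentralSeries_le k (LieIdeal.mem_map ha)
  have hp : (lowerCentralSeries R M M k).toSubmodule ≤ LinearMap.ker p.toLinearMap := by
    intro y hy
    have := LieIdeal.map_lowerCentralSeries_le k (LieIdeal.mem_map (f := p) hy)
    rwa [lowerCentralSeries_quotient_lowerCentralSeries_eq_bot, LieSubmodule.mem_bot] at this
  let φ : (L ⧸ lowerCentralSeries R L L k) →ₗ⁅R⁆ (M ⧸ lowerCentralSeries R M M k) :=
    { toLinearMap := Submodule.mapQ _ _ f.toLinearMap hf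
      map_lie' := by rintro ⟨a⟩ ⟨b⟩; exact congrArg _ (f.map_lie a b) }
  let ψ : (M ⧸ lowerCentralSeries R M M k) →ₗ⁅R⁆ (L ⧸ lowerCentralSeries R L L k) :=
    { toLinearMap := Submodule.liftQ _ p.toLinearMap hp
      map_lie' := by rintro ⟨a⟩ ⟨b⟩; exact p.map_lie a b }
  refine ⟨{ φ with invFun := ψ, left_inv := ?_, right_inv := ?_ }, fun a => rfl⟩
  · rintro ⟨a⟩
    exact hpf a
  · rintro ⟨y⟩
    obtain ⟨a, ha⟩ := LieSubmodule.Quotient.surjective_mk' _ (p y)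
    change φ (p y) = LieSubmodule.Quotient.mk y
    rw [← ha]
    change (LieSubmodule.Quotient.mk (f a) : M ⧸ lowerCentralSeries R M M k) =
      LieSubmodule.Quotient.mk y
    rw [← sub_eq_zero, ← Submodule.Quotient.mk_sub, LieSubmodule.Quotient.mk_eq_zero']
    exact hker _ (by rw [map_sub, hpf]; exact sub_eq_zero.mpr ha)

end LowerCentralSeries

namespace LiePronilpotentCompletion

variable {L}

local notation "γ" => lowerCentralSeries ℤ L L

def proj (n : ℕ) : LiePronilpotentCompletion L →ₗ⁅ℤ⁆ L ⧸ γ n where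
  toFun x := (x : ∀ n, L ⧸ γ n) n
  map_add' _ _ := rfl
  map_smul' _ _ := rfl
  map_lie' := rfl

lemma lieNilpTransition_proj_succ (x : LiePronilpotentCompletion L) (n : ℕ) :
    lieNilpTransition L n (proj (n + 1) x) = proj n x :=
  x.2 n

@[ext]
lemma ext {x y : LiePronilpotentCompletion L} (h : ∀ n, proj n x = proj n y) : x = y :=
  Subtype.ext (funext h)

lemma proj_toLiePronilpotentCompletion (n : ℕ) (a : L) :
    proj n (toLiePronilpotentCompletion L a) = LieSubmodule.Quotient.mk a :=
  rfl

lemma proj_zero_eq_zero (x : LiePronilpotentCompletion L) : proj 0 x = 0 := by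
  obtain ⟨a, ha⟩ := LieSubmodule.Quotient.surjective_mk' _ (proj 0 x)
  rw [← ha, LieSubmodule.Quotient.mk_eq_zero, lowerCentralSeries_zero]
  exact LieSubmodule.mem_top a

lemma proj_eq_zero_of_le {x : LiePronilpotentCompletion L} {n k : ℕ} (hnk : n ≤ k)
    (hx : proj k x = 0) : proj n x = 0 := by
  induction k, hnk using Nat.le_induction with
  | base => exact hx
  | succ k _ ih => exact ih (by rw [← lieNilpTransition_proj_succ, hx, map_zero])

lemma mk_sum_range_succ {v : ℕ → L} (hv : ∀ n, v n ∈ γ n) (n : ℕ) :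
    (LieSubmodule.Quotient.mk (∑ j ∈ Finset.range (n + 1), v j) : L ⧸ γ n) =
      LieSubmodule.Quotient.mk (∑ j ∈ Finset.range n, v j) := by
  rw [Finset.sum_range_succ, ← LieSubmodule.Quotient.mk'_apply, map_add,
    (LieSubmodule.Quotient.mk_eq_zero _).mpr (hv n), add_zero, LieSubmodule.Quotient.mk'_apply]

def ofSeries (v : ℕ → L) (hv : ∀ n, v n ∈ γ n) : LiePronilpotentCompletion L :=
  ⟨fun n => LieSubmodule.Quotient.mk (∑ j ∈ Finset.range n, v j), fun n => mk_sum_range_succ hv n⟩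

lemma proj_ofSeries {v : ℕ → L} (hv : ∀ n, v n ∈ γ n) (n : ℕ) :
    proj n (ofSeries v hv) = LieSubmodule.Quotient.mk (∑ j ∈ Finset.range n, v j) :=
  rfl

lemma exists_eq_ofSeries {x : LiePronilpotentCompletion L} {k : ℕ} (hx : proj k x = 0) :
    ∃ (v : ℕ → L) (hv : ∀ n, v n ∈ γ n), (∀ j < k, v j = 0) ∧ ofSeries v hv = x := by
  have lift (n : ℕ) : ∃ a : L, LieSubmodule.Quotient.mk a = proj n x ∧ (proj n x = 0 → a = 0) := by
    by_cases h : proj n x = 0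
    · exact ⟨0, h ▸ rfl, fun _ => rfl⟩
    · obtain ⟨a, ha⟩ := LieSubmodule.Quotient.surjective_mk' _ (proj n x)
      exact ⟨a, ha, fun h' => absurd h' h⟩
  -- Lifting `0` to `0` makes the increments `P (n + 1) - P n` vanish for `n < k`.
  choose P hP hP0 using lift
  have hPsucc (n : ℕ) : (LieSubmodule.Quotient.mk (P (n + 1)) : L ⧸ γ n) = proj n x := by
    rw [← lieNilpTransition_proj_succ, ← hP (n + 1)]
    rfl
  refine ⟨fun n => P (n + 1) - P n, fun n => ?_, fun j hj => ?_, ext fun n => ?_⟩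
  · rw [← LieSubmodule.Quotient.mk_eq_zero, map_sub, LieSubmodule.Quotient.mk'_apply,
      LieSubmodule.Quotient.mk'_apply, hPsucc, hP, sub_self]
  · dsimp only
    rw [hP0 j (proj_eq_zero_of_le hj.le hx), hP0 (j + 1) (proj_eq_zero_of_le hj hx), sub_self]
  · rw [proj_ofSeries, Finset.sum_range_sub, hP0 0 (proj_zero_eq_zero x), sub_zero, hP]

lemma ofSeries_mem_lowerCentralSeries {S : Finset L} (hS : LieSubalgebra.lieSpan ℤ L S = ⊤)
    (k : ℕ) (v : ℕ → L) (hv : ∀ n, v n ∈ γ n) (hv0 : ∀ j < k, v j = 0) :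
    ofSeries v hv ∈ lowerCentralSeries ℤ (LiePronilpotentCompletion L)
      (LiePronilpotentCompletion L) k := by
  induction k generalizing v with
  | zero => exact LieSubmodule.mem_top _
  | succ k ih =>
    have decompose (i : ℕ) : ∃ w : L → L, (∀ t, w t ∈ γ i) ∧ ∑ t ∈ S, ⁅t, w t⁆ = v (i + 1) ∧
        (i < k → w = 0) := by
      by_cases hi : i < k
      · exact ⟨0, fun _ => zero_mem _, by simp [hv0 (i + 1) (by omega)], fun _ => rfl⟩
      · obtain ⟨w, hw, hsum⟩ := exists_sum_lie_eq_of_mem_lowerCentralSeries_succ hS (hv (i + 1))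
        exact ⟨w, hw, hsum, fun h => absurd h hi⟩
    choose w hw hsum hw0 using decompose
    have heq : ofSeries v hv =
        ∑ t ∈ S, ⁅toLiePronilpotentCompletion L t, ofSeries (w · t) (hw · t)⁆ := by
      ext n
      let π := LieSubmodule.Quotient.mk' (γ n)
      calc proj n (ofSeries v hv) = π (∑ j ∈ Finset.range (n + 1), v j) :=
            (mk_sum_range_succ hv n).symm
        _ = π (∑ i ∈ Finset.range n, ∑ t ∈ S, ⁅t, w i t⁆) := by
            simp only [hsum, Finset.sum_range_succ' v, hv0 0 k.succ_pos, add_zero]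
        _ = ∑ t ∈ S, ⁅π t, π (∑ i ∈ Finset.range n, w i t)⁆ := by
            rw [Finset.sum_comm, map_sum]
            simp only [← lie_sum]
            rfl
        _ = proj n (∑ t ∈ S, ⁅toLiePronilpotentCompletion L t, ofSeries (w · t) (hw · t)⁆) := by
            rw [map_sum]
            rfl
    rw [heq]
    refine sum_mem fun t _ => ?_
    rw [LieModule.lowerCentralSeries_succ]
    exact LieSubmodule.lie_mem_lie (LieSubmodule.mem_top _)
      (ih _ _ fun i hi => by rw [hw0 i hi, Pi.zero_apply])

lemma mem_lowerCentralSeries_of_proj_eq_zero {S : Finset L}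
    (hS : LieSubalgebra.lieSpan ℤ L S = ⊤) {k : ℕ} {x : LiePronilpotentCompletion L}
    (hx : proj k x = 0) :
    x ∈ lowerCentralSeries ℤ (LiePronilpotentCompletion L) (LiePronilpotentCompletion L) k := by
  obtain ⟨v, hv, hv0, rfl⟩ := exists_eq_ofSeries hx
  exact ofSeries_mem_lowerCentralSeries hS k v hv hv0

end LiePronilpotentCompletion

/-- **Lemma 6.2.** For a finitely generated Lie algebra `𝔤` over `ℤ`, the canonical map
`η : 𝔤 → 𝔤̂` to the pronilpotent completion induces isomorphisms
`𝔤/γ_n(𝔤) ≅ 𝔤̂/γ_n(𝔤̂)` on all lower-central quotients (in particular on abelianizations). -/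
theorem lie_lowerCentralQuotients_iso_completion
    (hfg : ∃ S : Finset L, LieSubalgebra.lieSpan ℤ L ↑S = ⊤) (k : ℕ) :
    ∃ e : (L ⧸ LieModule.lowerCentralSeries ℤ L L k) ≃ₗ⁅ℤ⁆
        (↥(LiePronilpotentCompletion L) ⧸
          LieModule.lowerCentralSeries ℤ ↥(LiePronilpotentCompletion L)
            ↥(LiePronilpotentCompletion L) k),
      ∀ x : L,
        e (LieSubmodule.Quotient.mk x) =
          LieSubmodule.Quotient.mk (toLiePronilpotentCompletion L x) := by
  obtain ⟨S, hS⟩ := hfg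
  exact exists_lieEquiv_quotient_lowerCentralSeries (toLiePronilpotentCompletion L)
    (LiePronilpotentCompletion.proj k)
    (LiePronilpotentCompletion.proj_toLiePronilpotentCompletion k)
    fun _ => LiePronilpotentCompletion.mem_lowerCentralSeries_of_proj_eq_zero hS
end
end
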